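/- arXiv:2208.00668 — 10 statements merged into one kernel-verified Lean document; each statement's English description precedes it below -/
import Mathlib

section
/- Let f : X → X be a continuous map on a compact Hausdorff space X. Then the topological entropy of f (defined via open covers) equals sup over symmetric entourages 𝓔 of limsupₙ (1/n) log S(n,𝓔), and also equals sup over 𝓔 of limsupₙ (1/n) log R(n,𝓔), where S(n,𝓔) and R(n,𝓔) are the maximal cardinality of an (n,𝓔)-separated set and the minimal cardinality of an (n,𝓔)-covering set respectively. -/
open Set Filter Uniformity
open scoped ENNReal

variable {X : Type*}

/-- `dynN f U n` is the complexity `N(𝔘ₙ)` of the joint cover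
`𝔘ₙ = 𝔘 ∨ f⁻¹𝔘 ∨ ⋯ ∨ f⁻⁽ⁿ⁻¹⁾𝔘`. -/
noncomputable def dynN (f : X → X) (U : Finset (Set X)) (n : ℕ) : ℕ :=
  sInf {m : ℕ | ∃ c : Fin m → Fin n → Set X,
    (∀ (j : Fin m) (i : Fin n), c j i ∈ U) ∧
      (⋃ j : Fin m, ⋂ i : Fin n, f^[(i : ℕ)] ⁻¹' c j i) = Set.univ}

/-- Topological entropy defined via finite open covers. -/
noncomputable def coverEntropy [TopologicalSpace X] (f : X → X) : ℝ≥0∞ :=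
  ⨆ (U : Finset (Set X)) (_ : ∀ u ∈ U, IsOpen u) (_ : ⋃₀ (U : Set (Set X)) = Set.univ),
    Filter.limsup (fun n : ℕ => ENNReal.ofReal (Real.log (dynN f U n)) / (n : ℝ≥0∞))
      Filter.atTop

/-- A set `T` is `(n,𝓔)`-separated. -/
def IsDynSeparated (f : X → X) (E : Set (X × X)) (n : ℕ) (T : Set X) : Prop :=
  T.Pairwise fun x y => ∃ k ≤ n, (f^[k] x, f^[k] y) ∉ E

/-- A set `F` is `(n,𝓔)`-covering. -/
def IsDynCovering (f : X → X) (E : Set (X × X)) (n : ℕ) (F : Set X) : Prop :=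
  ∀ x : X, ∃ y ∈ F, ∀ k ≤ n, (f^[k] x, f^[k] y) ∈ E

/-- `S(n,𝓔)`: maximal cardinality of an `(n,𝓔)`-separated set. -/
noncomputable def dynS (f : X → X) (E : Set (X × X)) (n : ℕ) : ℕ :=
  sSup {m : ℕ | ∃ T : Finset X, IsDynSeparated f E n (T : Set X) ∧ T.card = m}

/-- `R(n,𝓔)`: minimal cardinality of an `(n,𝓔)`-covering set. -/
noncomputable def dynR (f : X → X) (E : Set (X × X)) (n : ℕ) : ℕ :=
  sInf {m : ℕ | ∃ F : Finset X, IsDynCovering f E n (F : Set X) ∧ F.card = m}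

/-! The `(n,𝓔)`-separated and `(n,𝓔)`-covering counts are squeezed between cover complexities:
if every member of the open cover `𝔘` is `𝓔`-small, distinct points of an `(n,𝓔)`-separated set lie
in distinct members of `𝔘ₙ₊₁`, so `S(n,𝓔) ≤ N(𝔘ₙ₊₁)`; conversely, if `𝓔` is below a Lebesgue
entourage of `𝔘`, the `𝓔`-orbit-balls around an `(n,𝓔)`-covering set refine `𝔘ₙ₊₁`, so
`N(𝔘ₙ₊₁) ≤ R(n,𝓔)`. A maximal separated set is covering, so `R ≤ S`. The shift `n + 1 ↦ n` does not
change exponential growth rates. -/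

open Topology

noncomputable def growthRate (a : ℕ → ℕ) : ℝ≥0∞ :=
  limsup (fun n : ℕ => ENNReal.ofReal (Real.log (a n)) / (n : ℝ≥0∞)) atTop

lemma ENNReal.limsup_comp_succ_div_natCast (u : ℕ → ℝ≥0∞) :
    limsup (fun n : ℕ => u (n + 1) / (n : ℝ≥0∞)) atTop =
      limsup (fun n : ℕ => u n / (n : ℝ≥0∞)) atTop := by
  refine le_antisymm ?_ ?_
  · have hratio : Tendsto (fun n : ℕ => ((n + 1 : ℕ) : ℝ≥0∞) / n) atTop (𝓝 1) := by
      have h := (ENNReal.tendsto_inv_nat_nhds_zero).const_add (1 : ℝ≥0∞)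
      rw [add_zero] at h
      refine h.congr' ((eventually_ne_atTop 0).mono fun n hn => ?_)
      dsimp only
      rw [Nat.cast_succ, ENNReal.add_div, ENNReal.div_self (by exact_mod_cast hn)
        (ENNReal.natCast_ne_top n), one_div]
    have hsplit : (fun n : ℕ => u (n + 1) / (n : ℝ≥0∞)) =
        (fun n : ℕ => u (n + 1) / ((n + 1 : ℕ) : ℝ≥0∞)) * fun n => ((n + 1 : ℕ) : ℝ≥0∞) / n := by
      funext n
      simp only [Pi.mul_apply, div_eq_mul_inv, mul_assoc]
      rw [ENNReal.inv_mul_cancel_left (by positivity) (ENNReal.natCast_ne_top _)]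
    rw [hsplit]
    calc _ ≤ limsup (fun n : ℕ => u (n + 1) / ((n + 1 : ℕ) : ℝ≥0∞)) atTop *
          limsup (fun n : ℕ => ((n + 1 : ℕ) : ℝ≥0∞) / n) atTop :=
          ENNReal.limsup_mul_le' (.inr (by rw [hratio.limsup_eq]; exact ENNReal.one_ne_top))
            (.inr (by rw [hratio.limsup_eq]; exact one_ne_zero))
      _ = _ := by
        rw [hratio.limsup_eq, mul_one, limsup_nat_add (fun n : ℕ => u n / (n : ℝ≥0∞)) 1]
  · rw [← limsup_nat_add (fun n : ℕ => u n / (n : ℝ≥0∞)) 1]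
    exact limsup_le_limsup (.of_forall fun n =>
      ENNReal.div_le_div_left (by exact_mod_cast n.le_succ) _)

lemma growthRate_comp_succ (a : ℕ → ℕ) : growthRate (fun n => a (n + 1)) = growthRate a :=
  ENNReal.limsup_comp_succ_div_natCast fun n => ENNReal.ofReal (Real.log (a n))

lemma growthRate_mono {a b : ℕ → ℕ} (h : ∀ n, a n ≤ b n) : growthRate a ≤ growthRate b := by
  refine limsup_le_limsup (.of_forall fun n => ENNReal.div_le_div_right ?_ _)
  rcases (a n).eq_zero_or_pos with ha | ha
  · simp [ha]
  · exact ENNReal.ofReal_le_ofReal (Real.log_le_log (by exact_mod_cast ha) (by exact_mod_cast h n))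

section CoverComplexity

variable {f : X → X} {U : Finset (Set X)} {n : ℕ}

lemma exists_fin_card_cover {ι : Type*} [Fintype ι] (c : ι → Fin n → Set X)
    (hc : ∀ j i, c j i ∈ U) (hcov : ⋃ j, ⋂ i : Fin n, f^[i] ⁻¹' c j i = univ) :
    ∃ c' : Fin (Fintype.card ι) → Fin n → Set X, (∀ j i, c' j i ∈ U) ∧
      ⋃ j, ⋂ i : Fin n, f^[i] ⁻¹' c' j i = univ := by
  refine ⟨fun j => c ((Fintype.equivFin ι).symm j), fun j i => hc _ i, ?_⟩
  rw [← hcov]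
  exact (Fintype.equivFin ι).symm.surjective.iUnion_comp fun j => ⋂ i : Fin n, f^[i] ⁻¹' c j i

lemma dynN_le_card {ι : Type*} [Fintype ι] (c : ι → Fin n → Set X) (hc : ∀ j i, c j i ∈ U)
    (hcov : ⋃ j, ⋂ i : Fin n, f^[i] ⁻¹' c j i = univ) :
    dynN f U n ≤ Fintype.card ι :=
  Nat.sInf_le (exists_fin_card_cover c hc hcov)

lemma exists_dynN_cover (hU : ⋃₀ (U : Set (Set X)) = univ) (n : ℕ) :
    ∃ c : Fin (dynN f U n) → Fin n → Set X, (∀ j i, c j i ∈ U) ∧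
      ⋃ j, ⋂ i : Fin n, f^[i] ⁻¹' c j i = univ := by
  suffices hne : ∃ m, ∃ c : Fin m → Fin n → Set X, (∀ j i, c j i ∈ U) ∧
      ⋃ j, ⋂ i : Fin n, f^[i] ⁻¹' c j i = univ from Nat.sInf_mem hne
  refine ⟨_, exists_fin_card_cover (ι := Fin n → U) (fun σ i => σ i)
    (fun σ i => (σ i).2) (eq_univ_of_forall fun x => ?_)⟩
  have hmem : ∀ i : Fin n, ∃ u : U, f^[i] x ∈ (u : Set X) := fun i => by
    obtain ⟨u, hu, hxu⟩ := hU ▸ mem_univ (f^[i] x)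
    exact ⟨⟨u, hu⟩, hxu⟩
  choose σ hσ using hmem
  exact mem_iUnion.2 ⟨σ, mem_iInter.2 hσ⟩

end CoverComplexity

section SeparatedCovering

variable {f : X → X} {E : Set (X × X)} {n : ℕ}

lemma IsDynSeparated.card_le_dynN {U : Finset (Set X)} (hU : ⋃₀ (U : Set (Set X)) = univ)
    (hsmall : ∀ u ∈ U, u ×ˢ u ⊆ E) {T : Finset X} (hT : IsDynSeparated f E n (T : Set X)) :
    T.card ≤ dynN f U (n + 1) := by
  obtain ⟨c, hc, hcov⟩ := exists_dynN_cover (f := f) hU (n + 1)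
  have hcell : ∀ x, ∃ j, ∀ i : Fin (n + 1), f^[i] x ∈ c j i := fun x => by
    simpa using (hcov.symm ▸ mem_univ x : x ∈ ⋃ j, ⋂ i : Fin (n + 1), f^[i] ⁻¹' c j i)
  choose cell hcell using hcell
  have hinj : Set.InjOn cell (T : Set X) := by
    intro x hx y hy hxy
    by_contra hne
    obtain ⟨k, hk, hkE⟩ := hT hx hy hne
    have hkn : k < n + 1 := Nat.lt_succ_of_le hk
    exact hkE (hsmall _ (hc (cell x) ⟨k, hkn⟩)
      ⟨hcell x ⟨k, hkn⟩, hxy ▸ hcell y ⟨k, hkn⟩⟩)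
  simpa using Finset.card_le_card_of_injOn cell (fun x _ => Finset.mem_univ _) hinj

lemma dynS_le_dynN {U : Finset (Set X)} (hU : ⋃₀ (U : Set (Set X)) = univ)
    (hsmall : ∀ u ∈ U, u ×ˢ u ⊆ E) (n : ℕ) :
    dynS f E n ≤ dynN f U (n + 1) :=
  csSup_le ⟨0, ∅, by simp [IsDynSeparated]⟩ fun _ ⟨_, hT, hcard⟩ =>
    hcard ▸ hT.card_le_dynN hU hsmall

end SeparatedCovering

section Uniform

variable [UniformSpace X] {f : X → X} {E : Set (X × X)} {n : ℕ}

lemma exists_finite_open_cover_subset_entourage [CompactSpace X] (hE : E ∈ 𝓤 X) :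
    ∃ U : Finset (Set X), (∀ u ∈ U, IsOpen u) ∧ ⋃₀ (U : Set (Set X)) = univ ∧
      ∀ u ∈ U, u ×ˢ u ⊆ E := by
  classical
  obtain ⟨D, hD, hDopen, hDsymm, hDE⟩ := comp_open_symm_mem_uniformity_sets hE
  obtain ⟨t, ht⟩ := isCompact_univ.elim_finite_subcover (fun x => UniformSpace.ball x D)
    (fun x => UniformSpace.isOpen_ball x hDopen)
    fun x _ => mem_iUnion.2 ⟨x, refl_mem_uniformity hD⟩
  refine ⟨t.image fun x => UniformSpace.ball x D, ?_, ?_, ?_⟩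
  · simp only [Finset.mem_image]
    rintro _ ⟨x, -, rfl⟩
    exact UniformSpace.isOpen_ball x hDopen
  · simpa [eq_univ_iff_forall, subset_def] using ht
  · simp only [Finset.mem_image]
    rintro _ ⟨z, -, rfl⟩ ⟨x, y⟩ ⟨hx, hy⟩
    exact hDE ⟨z, hDsymm.symm _ _ hx, hy⟩

lemma IsDynSeparated.isDynCovering (hE : E ∈ 𝓤 X) (hsymm : SetRel.IsSymm E) {T : Set X}
    (hT : IsDynSeparated f E n T)
    (hmax : ∀ x ∉ T, ¬ IsDynSeparated f E n (insert x T)) :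
    IsDynCovering f E n T := by
  intro x
  by_contra! hfar
  have hxT : x ∉ T := fun hxT => by
    obtain ⟨k, -, hk⟩ := hfar x hxT
    exact hk (refl_mem_uniformity hE)
  refine hmax x hxT (hT.insert fun y hyT _ => ⟨hfar y hyT, ?_⟩)
  obtain ⟨k, hk, hkE⟩ := hfar y hyT
  exact ⟨k, hk, fun h => hkE (hsymm.symm _ _ h)⟩

lemma exists_isDynSeparated_isDynCovering [CompactSpace X] (hE : E ∈ 𝓤 X)
    (hsymm : SetRel.IsSymm E) (f : X → X) (n : ℕ) :
    ∃ T : Finset X, IsDynSeparated f E n (T : Set X) ∧ IsDynCovering f E n (T : Set X) ∧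
      T.card = dynS f E n := by
  classical
  obtain ⟨U, -, hU, hsmall⟩ := exists_finite_open_cover_subset_entourage hE
  have hbdd : BddAbove {m | ∃ T : Finset X, IsDynSeparated f E n (T : Set X) ∧ T.card = m} :=
    ⟨dynN f U (n + 1), fun _ ⟨_, hT, hcard⟩ => hcard ▸ hT.card_le_dynN hU hsmall⟩
  obtain ⟨T, hT, hcard⟩ := Nat.sSup_mem (s := {m | ∃ T : Finset X,
    IsDynSeparated f E n (T : Set X) ∧ T.card = m}) ⟨0, ∅, by simp [IsDynSeparated]⟩ hbdd
  refine ⟨T, hT, hT.isDynCovering hE hsymm fun x hx hsep => ?_, hcard⟩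
  have hle : (insert x T).card ≤ dynS f E n := le_csSup hbdd ⟨insert x T, by simpa using hsep, rfl⟩
  rw [Finset.card_insert_of_notMem hx, hcard] at hle
  exact Nat.not_succ_le_self _ hle

lemma dynR_le_dynS [CompactSpace X] (hE : E ∈ 𝓤 X) (hsymm : SetRel.IsSymm E) (f : X → X)
    (n : ℕ) : dynR f E n ≤ dynS f E n := by
  obtain ⟨T, -, hTcov, hcard⟩ := exists_isDynSeparated_isDynCovering hE hsymm f n
  exact hcard ▸ Nat.sInf_le ⟨T, hTcov, rfl⟩


lemma exists_entourage_dynN_le_dynR [CompactSpace X] {U : Finset (Set X)}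
    (hUopen : ∀ u ∈ U, IsOpen u) (hU : ⋃₀ (U : Set (Set X)) = univ) (f : X → X) :
    ∃ E ∈ 𝓤 X, SetRel.IsSymm E ∧ ∀ n, dynN f U (n + 1) ≤ dynR f E n := by
  obtain ⟨V, hV, hleb⟩ := lebesgue_number_lemma_sUnion isCompact_univ hUopen hU.ge
  have hE := symmetrize_mem_uniformity hV
  have hsymm : SetRel.IsSymm (SetRel.symmetrize V) := SetRel.isSymm_symmetrize
  refine ⟨_, hE, hsymm, fun n => le_csInf ?_ ?_⟩
  · obtain ⟨T, -, hTcov, -⟩ := exists_isDynSeparated_isDynCovering hE hsymm f n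
    exact ⟨_, T, hTcov, rfl⟩
  rintro _ ⟨F, hFcov, rfl⟩
  have hball : ∀ (y : F) (i : Fin (n + 1)), ∃ u ∈ U, UniformSpace.ball (f^[i] y) V ⊆ u :=
    fun y i => hleb _ (mem_univ _)
  choose u hu hball using hball
  refine (dynN_le_card u hu (eq_univ_of_forall fun x => ?_)).trans (Fintype.card_coe F).le
  obtain ⟨y, hyF, hy⟩ := hFcov x
  refine mem_iUnion.2 ⟨⟨y, hyF⟩, mem_iInter.2 fun i => hball _ i ?_⟩
  exact SetRel.symmetrize_subset_self (hsymm.symm _ _ (hy i (Nat.lt_succ_iff.1 i.2)))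

end Uniform

section Entropy

variable [UniformSpace X] [CompactSpace X] (f : X → X)

lemma growthRate_dynS_le_coverEntropy {E : Set (X × X)} (hE : E ∈ 𝓤 X) :
    growthRate (dynS f E) ≤ coverEntropy f := by
  obtain ⟨U, hUopen, hU, hsmall⟩ := exists_finite_open_cover_subset_entourage hE
  calc growthRate (dynS f E) ≤ growthRate fun n => dynN f U (n + 1) :=
        growthRate_mono (dynS_le_dynN hU hsmall)
    _ = growthRate (dynN f U) := growthRate_comp_succ _
    _ ≤ coverEntropy f := le_iSup₂_of_le U hUopen (le_iSup_of_le hU le_rfl)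

lemma coverEntropy_le_iSup_growthRate_dynR :
    coverEntropy f ≤ ⨆ (E ∈ 𝓤 X) (_ : SetRel.IsSymm E), growthRate (dynR f E) :=
  iSup₂_le fun U hUopen => iSup_le fun hU => by
    obtain ⟨E, hE, hsymm, hle⟩ := exists_entourage_dynN_le_dynR hUopen hU f
    calc growthRate (dynN f U) = growthRate fun n => dynN f U (n + 1) :=
          (growthRate_comp_succ _).symm
      _ ≤ growthRate (dynR f E) := growthRate_mono hle
      _ ≤ _ := le_iSup₂_of_le E hE (le_iSup (fun _ : SetRel.IsSymm E => _) hsymm)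

end Entropy

theorem stmt3_general [UniformSpace X] [CompactSpace X]
    (f : X → X) :
    (coverEntropy f =
      ⨆ (E : Set (X × X)) (_ : E ∈ 𝓤 X) (_ : SetRel.IsSymm E),
        Filter.limsup (fun n : ℕ => ENNReal.ofReal (Real.log (dynS f E n)) / (n : ℝ≥0∞))
          Filter.atTop) ∧
    (coverEntropy f =
      ⨆ (E : Set (X × X)) (_ : E ∈ 𝓤 X) (_ : SetRel.IsSymm E),
        Filter.limsup (fun n : ℕ => ENNReal.ofReal (Real.log (dynR f E n)) / (n : ℝ≥0∞))
          Filter.atTop) := by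
  have hS : ⨆ (E ∈ 𝓤 X) (_ : SetRel.IsSymm E), growthRate (dynS f E) ≤ coverEntropy f :=
    iSup₂_le fun E hE => iSup_le fun _ => growthRate_dynS_le_coverEntropy f hE
  have hRS : ⨆ (E ∈ 𝓤 X) (_ : SetRel.IsSymm E), growthRate (dynR f E) ≤
      ⨆ (E ∈ 𝓤 X) (_ : SetRel.IsSymm E), growthRate (dynS f E) :=
    iSup₂_mono fun E hE => iSup_mono fun hsymm => growthRate_mono (dynR_le_dynS hE hsymm f)
  have hN := coverEntropy_le_iSup_growthRate_dynR f
  exact ⟨le_antisymm (hN.trans hRS) hS, le_antisymm hN (hRS.trans hS)⟩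

/-- On a compact Hausdorff space the cover entropy equals the entropy computed with
`(n,𝓔)`-separated sets, and also with `(n,𝓔)`-covering sets, taking the supremum over
symmetric entourages `𝓔` of the canonical uniform structure. -/
theorem stmt3 [UniformSpace X] [CompactSpace X] [T2Space X]
    (f : X → X) (hf : Continuous f) :
    (coverEntropy f =
      ⨆ (E : Set (X × X)) (_ : E ∈ 𝓤 X) (_ : SetRel.IsSymm E),
        Filter.limsup (fun n : ℕ => ENNReal.ofReal (Real.log (dynS f E n)) / (n : ℝ≥0∞))
          Filter.atTop) ∧
    (coverEntropy f =
      ⨆ (E : Set (X × X)) (_ : E ∈ 𝓤 X) (_ : SetRel.IsSymm E),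
        Filter.limsup (fun n : ℕ => ENNReal.ofReal (Real.log (dynR f E n)) / (n : ℝ≥0∞))
          Filter.atTop) :=
  stmt3_general f
end

section
/- Let X be a quasi-compact Noetherian topological space and f : X → X a continuous map. Then for any finite open cover 𝔘 of X and any ε > 0, there exists C > 0 such that N(𝔘 ∨ f⁻¹𝔘 ∨ ⋯ ∨ f⁻⁽ⁿ⁻¹⁾𝔘) ≤ C(1+ε)ⁿ for all n. In particular the topological entropy of f is 0. -/
/-!
The itinerary of a point through the cover `U` is determined by its visit patterns to the open
sets `u ∈ U`, so `N(𝔘ₙ) ≤ ∏ᵤ #(visit patterns of u up to time n)` and it suffices to show that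
the number of visit patterns of an open set `A` grows subexponentially. If it did not, the Sauer–Shelah lemma
would give, for infinitely many `n`, a set of times of density bounded below in `[0, n)` that is
shattered by the orbits visiting `A`. Shifting it to a point from which it stays dense (a
rising-sun argument) and passing to an ultrafilter limit yields an infinite set `S` of times all
of whose initial segments are shattered. Then the open sets `⋃_{i ∈ S, i < M} f⁻ⁱ A` increase
strictly at every `M ∈ S`, which is impossible in a Noetherian space. Zero entropy follows since
`N(𝔘ₙ) ≤ e^{ηn}` eventually, for every `η > 0`.
-/

open Set Filter
open scoped ENNReal

variable {X : Type*}

open Finset in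
theorem pow_mul_sum_Iic_choose_le {t : ℝ} (ht₀ : 0 ≤ t) (ht₁ : t ≤ 1) (n d : ℕ) :
    t ^ d * ∑ j ∈ Iic d, (n.choose j : ℝ) ≤ (1 + t) ^ n := by
  set g : ℕ → ℝ := fun j => t ^ j * n.choose j
  calc t ^ d * ∑ j ∈ Iic d, (n.choose j : ℝ) = ∑ j ∈ Iic d, t ^ d * n.choose j := mul_sum _ _ _
    _ ≤ ∑ j ∈ Iic d, g j := sum_le_sum fun j hj =>
        mul_le_mul_of_nonneg_right (pow_le_pow_of_le_one ht₀ ht₁ (mem_Iic.1 hj)) (by positivity)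
    _ ≤ ∑ j ∈ Iic d ∪ range (n + 1), g j :=
        sum_le_sum_of_subset_of_nonneg subset_union_left fun _ _ _ => by positivity
    _ = ∑ j ∈ range (n + 1), g j := by
        refine (sum_subset subset_union_right fun j _ hj => ?_).symm
        simp [g, Nat.choose_eq_zero_of_lt (by simpa using hj : n < j)]
    _ = (1 + t) ^ n := by simp [g, add_comm (1 : ℝ), add_pow]

open Finset in
/-- Take `t ≤ 1` with `1 + t < ν` and `C` with `t⁻¹ < (ν / (1 + t)) ^ C`; then
`pow_mul_sum_Iic_choose_le` with `d = n / C` gives the bound. -/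
theorem exists_sum_Iic_choose_le_pow {ν : ℝ} (hν : 1 < ν) :
    ∃ C : ℕ, 0 < C ∧ ∀ n, ∑ j ∈ Iic (n / C), (n.choose j : ℝ) ≤ ν ^ n := by
  set t := min 1 ((ν - 1) / 2)
  have ht₀ : 0 < t := lt_min one_pos (by linarith)
  have ht₁ : t ≤ 1 := min_le_left _ _
  set q := ν / (1 + t)
  have hq : 1 < q := (one_lt_div (by positivity)).2 (by linarith [min_le_right 1 ((ν - 1) / 2)])
  obtain ⟨C, hC⟩ := pow_unbounded_of_one_lt t⁻¹ hq
  have hCpos : 0 < C := by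
    rcases Nat.eq_zero_or_pos C with rfl | h
    · exact absurd hC (by simpa using one_le_inv₀ ht₀ |>.2 ht₁)
    · exact h
  refine ⟨C, hCpos, fun n => ?_⟩
  set d := n / C
  have hdecay : 1 ≤ t ^ d * q ^ n :=
    calc 1 ≤ (t * q ^ C) ^ d := one_le_pow₀ (by
          simpa [mul_inv_cancel₀ ht₀.ne'] using (mul_lt_mul_of_pos_left hC ht₀).le)
      _ = t ^ d * q ^ (C * d) := by rw [mul_pow, pow_mul]
      _ ≤ t ^ d * q ^ n := by gcongr; exacts [hq.le, Nat.mul_div_le n C]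
  calc ∑ j ∈ Iic d, (n.choose j : ℝ) ≤ (∑ j ∈ Iic d, (n.choose j : ℝ)) * (t ^ d * q ^ n) :=
        le_mul_of_one_le_right (by positivity) hdecay
    _ = (t ^ d * ∑ j ∈ Iic d, (n.choose j : ℝ)) * q ^ n := by ring
    _ ≤ (1 + t) ^ n * q ^ n := by gcongr; exact pow_mul_sum_Iic_choose_le ht₀.le ht₁ n d
    _ = ν ^ n := by rw [← mul_pow, mul_div_cancel₀ _ (by positivity)]

open Finset in
theorem exists_shatters_lt_card_of_sum_choose_lt {α : Type*} [Fintype α] [DecidableEq α]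
    {𝒜 : Finset (Finset α)} {d : ℕ} (h : ∑ k ∈ Iic d, (Fintype.card α).choose k < #𝒜) :
    ∃ s, 𝒜.Shatters s ∧ d < #s := by
  by_contra! hs
  have hvc : 𝒜.vcDim ≤ d := Finset.sup_le fun s hs' => hs s (mem_shatterer.1 hs')
  have := (card_le_card_shatterer 𝒜).trans
    (card_shatterer_le_sum_vcDim.trans (sum_le_sum_of_subset (Iic_subset_Iic.2 hvc)))
  omega

/-- Rising sun: `g` minimises `K * #(p ∩ [0, g)) + (n - g)` over `g ≤ n`. Comparing with `g + m`
bounds the count of `p` on `[g, g + m)` from below when `g + m ≤ n`, and comparing with `0` does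
so when `g + m > n`. -/
theorem exists_forall_le_mul_count_shift {p : ℕ → Prop} [DecidablePred p] {n K : ℕ}
    (hK : 2 * n ≤ K * Nat.count p n) :
    ∃ g, ∀ m ≤ n, m ≤ K * Nat.count (fun k => p (g + k)) m := by
  obtain ⟨g, hg, hmin⟩ := Finset.exists_min_image (Finset.range (n + 1))
    (fun g => K * Nat.count p g + (n - g)) ⟨0, by simp⟩
  have hgn : g ≤ n := Nat.lt_succ_iff.1 (Finset.mem_range.1 hg)
  have h0 := hmin 0 (by simp)
  simp only [Nat.count_zero, mul_zero, zero_add, tsub_zero] at h0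
  refine ⟨g, fun m hm => ?_⟩
  have hsplit := Nat.count_add (p := p) g m
  by_cases hgm : g + m ≤ n
  · have := hmin (g + m) (by simp; omega)
    rw [hsplit, mul_add] at this
    omega
  · have := Nat.mul_le_mul_left K (Nat.count_monotone p (show n ≤ g + m by omega))
    rw [hsplit, mul_add] at this
    omega

theorem exists_frequently_agree {α : Type*} (T : ℕ → Set α) :
    ∃ S : Set α, ∀ F : Set α, F.Finite → ∃ᶠ k in atTop, ∀ i ∈ F, (i ∈ S ↔ i ∈ T k) := by
  set S : Set α := {i | ∀ᶠ k in (hyperfilter ℕ : Filter ℕ), i ∈ T k}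
  refine ⟨S, fun F hF => ?_⟩
  have hagree : ∀ᶠ k in (hyperfilter ℕ : Filter ℕ), ∀ i ∈ F, (i ∈ S ↔ i ∈ T k) := by
    refine (eventually_all_finite hF).2 fun i _ => ?_
    by_cases hi : ∀ᶠ k in (hyperfilter ℕ : Filter ℕ), i ∈ T k
    · exact hi.mono fun k hk => iff_of_true hi hk
    · exact (Ultrafilter.eventually_not.2 hi).mono fun k hk => iff_of_false hi hk
  rw [← Nat.cofinite_eq_atTop]
  exact hagree.frequently.filter_mono hyperfilter_le_cofinite

open Classical in
theorem exists_unbounded_forall_inter_Iio {P : Set ℕ → Prop}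
    (hP : ∀ ⦃s t : Set ℕ⦄, s ⊆ t → P t → P s) {K : ℕ}
    (hdense : ∀ N, ∃ T, P T ∧ ∀ m ≤ N, m ≤ K * Nat.count (· ∈ T) m) :
    ∃ S : Set ℕ, (∀ N, ∃ M ≥ N, M ∈ S) ∧ ∀ M, P (S ∩ Iio M) := by
  choose T hPT hTdense using hdense
  obtain ⟨S, hS⟩ := exists_frequently_agree T
  refine ⟨S, fun N => ?_, fun M => ?_⟩
  · by_contra! hbdd
    set m := K * N + 1
    obtain ⟨k, hk, hmk⟩ :=
      ((hS _ (finite_Iio m)).and_eventually (eventually_ge_atTop m)).exists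
    have hsmall : Nat.count (· ∈ T k) m ≤ N := by
      rw [Nat.count_eq_card_filter_range]
      refine (Finset.card_le_card fun i hi => ?_).trans (Finset.card_range N).le
      simp only [Finset.mem_filter, Finset.mem_range] at hi ⊢
      exact not_le.1 fun hiN => hbdd i hiN ((hk i hi.1).2 hi.2)
    have := (hTdense k m hmk).trans (Nat.mul_le_mul_left K hsmall)
    omega
  · obtain ⟨k, hk⟩ := (hS _ (finite_Iio M)).exists
    exact hP (fun i hi => (hk i hi.2).1 hi.1) (hPT k)

def ShattersTimes (f : X → X) (A : Set X) (B : Set ℕ) : Prop :=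
  ∀ H ⊆ B, ∃ x, ∀ i ∈ B, (f^[i] x ∈ A ↔ i ∈ H)

namespace ShattersTimes

variable {f : X → X} {A : Set X} {B B' : Set ℕ}

theorem mono (h : ShattersTimes f A B) (hB : B' ⊆ B) : ShattersTimes f A B' := fun H hH =>
  let ⟨x, hx⟩ := h H (hH.trans hB)
  ⟨x, fun i hi => hx i (hB hi)⟩

theorem preimage_add (h : ShattersTimes f A B) (g : ℕ) :
    ShattersTimes f A ((g + ·) ⁻¹' B) := by
  intro H hH
  obtain ⟨x, hx⟩ := h ((g + ·) '' H) (image_subset_iff.2 hH)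
  refine ⟨f^[g] x, fun i hi => ?_⟩
  rw [← Function.iterate_add_apply, add_comm, hx _ hi, (add_right_injective g).mem_set_image]

end ShattersTimes

theorem not_forall_shattersTimes_inter_Iio [TopologicalSpace X]
    [TopologicalSpace.NoetherianSpace X] {f : X → X} (hf : Continuous f) {A : Set X}
    (hA : IsOpen A) {S : Set ℕ} (hS : ∀ N, ∃ M ≥ N, M ∈ S) :
    ¬ ∀ M, ShattersTimes f A (S ∩ Iio M) := by
  intro hsh
  let W : ℕ →o TopologicalSpace.Opens X :=
    ⟨fun M => ⟨⋃ i ∈ S ∩ Iio M, f^[i] ⁻¹' A, isOpen_biUnion fun i _ => hA.preimage (hf.iterate i)⟩,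
      fun a b hab => biUnion_subset_biUnion_left (inter_subset_inter_right _ (Iio_subset_Iio hab))⟩
  obtain ⟨N, hN⟩ := WellFoundedGT.monotone_chain_condition W
  obtain ⟨M, hMN, hMS⟩ := hS N
  obtain ⟨x, hx⟩ := hsh (M + 1) {M} (singleton_subset_iff.2 ⟨hMS, Nat.lt_succ_self M⟩)
  have hin : x ∈ (W (M + 1) : Set X) :=
    mem_biUnion ⟨hMS, Nat.lt_succ_self M⟩ ((hx M ⟨hMS, Nat.lt_succ_self M⟩).2 rfl)
  rw [← hN (M + 1) (by omega), hN M hMN] at hin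
  obtain ⟨i, ⟨hiS, hiM⟩, hix⟩ := mem_iUnion₂.1 hin
  exact hiM.ne ((hx i ⟨hiS, hiM.trans (Nat.lt_succ_self M)⟩).1 hix)

open Classical in
noncomputable def visits (f : X → X) (A : Set X) (n : ℕ) (x : X) : Finset (Fin n) :=
  Finset.univ.filter fun i => f^[i] x ∈ A

noncomputable def visitPatterns (f : X → X) (A : Set X) (n : ℕ) : Finset (Finset (Fin n)) :=
  (Set.range (visits f A n)).toFinite.toFinset

theorem mem_visits {f : X → X} {A : Set X} {n : ℕ} {x : X} {i : Fin n} :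
    i ∈ visits f A n x ↔ f^[i] x ∈ A := by
  simp [visits]

theorem shattersTimes_of_shatters {f : X → X} {A : Set X} {n : ℕ} {s : Finset (Fin n)}
    (h : (visitPatterns f A n).Shatters s) : ShattersTimes f A (Fin.val '' (s : Set (Fin n))) := by
  classical
  intro H hH
  obtain ⟨u, hu, hsu⟩ := h (Finset.filter_subset (fun i : Fin n => (i : ℕ) ∈ H) s)
  obtain ⟨x, rfl⟩ := (Set.Finite.mem_toFinset _).1 hu
  refine ⟨x, ?_⟩
  rintro _ ⟨i, hi, rfl⟩
  have := congrArg (i ∈ ·) hsu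
  simp only [Finset.mem_inter, Finset.mem_filter, mem_visits, eq_iff_iff] at this
  simpa only [Finset.mem_coe.1 hi, true_and] using this

open Classical in
theorem count_mem_image_val {n : ℕ} (s : Finset (Fin n)) :
    Nat.count (· ∈ Fin.val '' (s : Set (Fin n))) n = s.card := by
  rw [Nat.count_eq_card_filter_range, ← Finset.card_map Fin.valEmbedding]
  congr 1
  ext i
  simp only [Finset.mem_filter, Finset.mem_range, Finset.mem_map, Fin.valEmbedding_apply,
    Set.mem_image, Finset.mem_coe]
  exact ⟨fun ⟨_, j, hj, hji⟩ => ⟨j, hj, hji⟩, fun ⟨j, hj, hji⟩ => ⟨hji ▸ j.isLt, j, hj, hji⟩⟩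

open Classical in
theorem exists_dense_shattersTimes {f : X → X} {A : Set X} {ν : ℝ} (hν : 1 < ν)
    (h : ∃ᶠ n in atTop, ν ^ n < (visitPatterns f A n).card) :
    ∃ K : ℕ, ∀ N, ∃ T, ShattersTimes f A T ∧ ∀ m ≤ N, m ≤ K * Nat.count (· ∈ T) m := by
  obtain ⟨C, hC, hsum⟩ := exists_sum_Iic_choose_le_pow hν
  refine ⟨2 * C, fun N => ?_⟩
  obtain ⟨n, hn, hNn⟩ := (h.and_eventually (eventually_ge_atTop N)).exists
  have hlt : ∑ j ∈ Finset.Iic (n / C), (Fintype.card (Fin n)).choose j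
      < (visitPatterns f A n).card := by
    rw [Fintype.card_fin]
    exact_mod_cast (hsum n).trans_lt hn
  obtain ⟨s, hs, hds⟩ := exists_shatters_lt_card_of_sum_choose_lt hlt
  have hdense : 2 * n ≤ 2 * C * Nat.count (· ∈ Fin.val '' (s : Set (Fin n))) n := by
    rw [count_mem_image_val, mul_assoc]
    exact Nat.mul_le_mul_left 2 ((Nat.lt_mul_div_succ n hC).le.trans (Nat.mul_le_mul_left C hds))
  obtain ⟨g, hg⟩ := exists_forall_le_mul_count_shift hdense
  exact ⟨_, (shattersTimes_of_shatters hs).preimage_add g, fun m hm => hg m (hm.trans hNn)⟩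

theorem eventually_card_visitPatterns_le_pow [TopologicalSpace X]
    [TopologicalSpace.NoetherianSpace X] {f : X → X} (hf : Continuous f) {A : Set X}
    (hA : IsOpen A) {ν : ℝ} (hν : 1 < ν) :
    ∀ᶠ n in atTop, ((visitPatterns f A n).card : ℝ) ≤ ν ^ n := by
  by_contra h
  simp only [not_eventually, not_le] at h
  obtain ⟨K, hK⟩ := exists_dense_shattersTimes hν h
  obtain ⟨S, hSunbdd, hSsh⟩ := exists_unbounded_forall_inter_Iio (fun _ _ hst ht => ht.mono hst) hK
  exact not_forall_shattersTimes_inter_Iio hf hA hSunbdd hSsh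

theorem dynN_le_natCard {f : X → X} {U : Finset (Set X)} {n : ℕ} {ι : Type*} [Finite ι]
    (c : ι → Fin n → Set X) (hcU : ∀ j i, c j i ∈ U) (hc : ∀ x, ∃ j, ∀ i, f^[i] x ∈ c j i) :
    dynN f U n ≤ Nat.card ι := by
  let e := Finite.equivFin ι
  refine Nat.sInf_le ⟨fun j => c (e.symm j), fun j i => hcU _ i, eq_univ_of_forall fun x => ?_⟩
  obtain ⟨j, hj⟩ := hc x
  exact mem_iUnion.2 ⟨e j, mem_iInter.2 fun i => by simpa using hj i⟩

theorem dynN_le_prod_card_visitPatterns {f : X → X} {U : Finset (Set X)}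
    (hcov : ⋃₀ (U : Set (Set X)) = univ) (n : ℕ) :
    dynN f U n ≤ ∏ u ∈ U, (visitPatterns f u n).card := by
  let code : X → (u : U) → Finset (Fin n) := fun x u => visits f u n x
  have hcode : range code ⊆ Fintype.piFinset fun u : U => visitPatterns f u n := by
    rintro _ ⟨x, rfl⟩
    simp [code, visitPatterns]
  have hcover : ∀ (p : range code) (i : Fin n), ∃ u ∈ U, f^[i] p.2.choose ∈ u := fun p i => by
    simpa using hcov.ge (mem_univ (f^[i] p.2.choose))
  choose c hcU hc using hcover
  calc dynN f U n ≤ Nat.card (range code) := by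
        refine dynN_le_natCard c hcU fun x => ⟨⟨code x, x, rfl⟩, fun i => ?_⟩
        set p : range code := ⟨code x, x, rfl⟩
        have hsame : visits f (c p i) n p.2.choose = visits f (c p i) n x :=
          congrFun p.2.choose_spec ⟨c p i, hcU p i⟩
        exact mem_visits.1 (hsame ▸ mem_visits.2 (hc p i))
    _ ≤ (Fintype.piFinset fun u : U => visitPatterns f u n).card :=
        (Nat.card_mono (Finset.finite_toSet _) hcode).trans_eq (Nat.card_eq_finsetCard _)
    _ = ∏ u ∈ U, (visitPatterns f u n).card := by
        rw [Fintype.card_piFinset, Finset.prod_coe_sort U fun u => (visitPatterns f u n).card]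

theorem exists_one_lt_pow_le {μ : ℝ} (hμ : 1 < μ) (r : ℕ) : ∃ ν : ℝ, 1 < ν ∧ ν ^ r ≤ μ := by
  refine ⟨μ ^ ((r + 1 : ℕ) : ℝ)⁻¹, Real.one_lt_rpow hμ (by positivity), ?_⟩
  calc (μ ^ ((r + 1 : ℕ) : ℝ)⁻¹) ^ r ≤ (μ ^ ((r + 1 : ℕ) : ℝ)⁻¹) ^ (r + 1) :=
        pow_le_pow_right₀ (Real.one_le_rpow hμ.le (by positivity)) (Nat.le_succ r)
    _ = μ := Real.rpow_inv_natCast_pow (by linarith) (Nat.succ_ne_zero r)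

theorem eventually_dynN_le_pow [TopologicalSpace X] [TopologicalSpace.NoetherianSpace X]
    {f : X → X} (hf : Continuous f) {U : Finset (Set X)} (hopen : ∀ u ∈ U, IsOpen u)
    (hcov : ⋃₀ (U : Set (Set X)) = univ) {μ : ℝ} (hμ : 1 < μ) :
    ∀ᶠ n in atTop, (dynN f U n : ℝ) ≤ μ ^ n := by
  obtain ⟨ν, hν, hνμ⟩ := exists_one_lt_pow_le hμ U.card
  filter_upwards [(U.eventually_all).2 fun u hu =>
    eventually_card_visitPatterns_le_pow hf (hopen u hu) hν] with n hn
  calc (dynN f U n : ℝ) ≤ ∏ u ∈ U, ((visitPatterns f u n).card : ℝ) := by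
        exact_mod_cast dynN_le_prod_card_visitPatterns hcov n
    _ ≤ ∏ _u ∈ U, ν ^ n := Finset.prod_le_prod (fun _ _ => by positivity) hn
    _ = (ν ^ U.card) ^ n := by rw [Finset.prod_const, ← pow_mul, ← pow_mul, mul_comm]
    _ ≤ μ ^ n := by gcongr

theorem exists_pos_le_mul_pow_of_eventually {u : ℕ → ℝ} {μ : ℝ} (hμ : 1 ≤ μ)
    (h : ∀ᶠ n in atTop, u n ≤ μ ^ n) : ∃ C : ℝ, 0 < C ∧ ∀ n, u n ≤ C * μ ^ n := by
  obtain ⟨N, hN⟩ := eventually_atTop.1 h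
  set C := 1 + ∑ m ∈ Finset.range N, |u m|
  have hC : 1 ≤ C := le_add_of_nonneg_right (Finset.sum_nonneg fun _ _ => abs_nonneg _)
  refine ⟨C, by linarith, fun n => ?_⟩
  have hpow : 1 ≤ μ ^ n := one_le_pow₀ hμ
  rcases lt_or_ge n N with hn | hn
  · calc u n ≤ |u n| := le_abs_self _
      _ ≤ ∑ m ∈ Finset.range N, |u m| :=
          Finset.single_le_sum (f := fun m => |u m|) (fun _ _ => abs_nonneg _)
            (Finset.mem_range.2 hn)
      _ ≤ C := le_add_of_nonneg_left zero_le_one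
      _ ≤ C * μ ^ n := le_mul_of_one_le_right (by linarith) hpow
  · exact (hN n hn).trans (le_mul_of_one_le_left (by linarith) hC)

theorem limsup_ofReal_log_div_le {u : ℕ → ℕ} {η : ℝ} (hη : 0 ≤ η)
    (h : ∀ᶠ n in atTop, (u n : ℝ) ≤ Real.exp (η * n)) :
    limsup (fun n : ℕ => ENNReal.ofReal (Real.log (u n)) / (n : ℝ≥0∞)) atTop
      ≤ ENNReal.ofReal η := by
  refine limsup_le_of_le (by isBoundedDefault) ?_
  filter_upwards [h] with n hn
  refine ENNReal.div_le_of_le_mul ?_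
  rw [← ENNReal.ofReal_natCast, ← ENNReal.ofReal_mul hη]
  refine ENNReal.ofReal_le_ofReal ?_
  rcases (Nat.cast_nonneg (u n) : (0 : ℝ) ≤ u n).eq_or_lt with h0 | hpos
  · rw [← h0, Real.log_zero]; positivity
  · exact (Real.log_le_iff_le_exp hpos).2 hn

theorem coverEntropy_eq_zero [TopologicalSpace X] [TopologicalSpace.NoetherianSpace X]
    {f : X → X} (hf : Continuous f) : coverEntropy f = 0 := by
  refine le_antisymm (iSup₂_le fun U hopen => iSup_le fun hcov => ?_) zero_le
  refine ENNReal.le_of_forall_pos_le_add fun η hη _ => ?_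
  rw [zero_add, ← ENNReal.ofReal_coe_nnreal]
  exact limsup_ofReal_log_div_le η.2 <|
    eventually_dynN_le_pow hf hopen hcov (Real.one_lt_exp_iff.2 hη) |>.mono fun n hn => by
      rwa [Real.exp_mul, Real.rpow_natCast]

theorem stmt4_general [TopologicalSpace X] [TopologicalSpace.NoetherianSpace X]
    (f : X → X) (hf : Continuous f)
    (U : Finset (Set X)) (hopen : ∀ u ∈ U, IsOpen u)
    (hcov : ⋃₀ (U : Set (Set X)) = Set.univ) (ε : ℝ) (hε : 0 < ε) :
    (∃ C : ℝ, 0 < C ∧ ∀ n : ℕ, (dynN f U n : ℝ) ≤ C * (1 + ε) ^ n) ∧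
    coverEntropy f = 0 :=
  ⟨exists_pos_le_mul_pow_of_eventually (by linarith)
      (eventually_dynN_le_pow hf hopen hcov (by linarith)),
    coverEntropy_eq_zero hf⟩

/-- On a quasi-compact Noetherian topological space, the complexities of the joint covers
of a continuous self-map grow subexponentially; in particular the topological entropy
vanishes. -/
theorem stmt4 [TopologicalSpace X] [TopologicalSpace.NoetherianSpace X] [CompactSpace X]
    (f : X → X) (hf : Continuous f)
    (U : Finset (Set X)) (hopen : ∀ u ∈ U, IsOpen u)
    (hcov : ⋃₀ (U : Set (Set X)) = Set.univ) (ε : ℝ) (hε : 0 < ε) :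
    (∃ C : ℝ, 0 < C ∧ ∀ n : ℕ, (dynN f U n : ℝ) ≤ C * (1 + ε) ^ n) ∧
    coverEntropy f = 0 :=
  stmt4_general f hf U hopen hcov ε hε
end

section
/- If p(T) = T^N − T^{N−1} − M₁T^{N−N₁} − ⋯ − M_k T^{N−N_k} with positive reals M₁,…,M_k, integers 0 < N₁ < ⋯ < N_k = N, and if ε > 0 satisfies Mᵢ(1+ε)^{1−Nᵢ} ≤ ε/10^i for all i, then every complex root λ of p has |λ| < 1 + ε. -/
open Finset

/-!
If `|λ| ≥ 1 + ε`, dividing `p(λ) = 0` by `λ^{N-1}` gives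
`λ = 1 + ∑ Mᵢ λ^{1-Nᵢ}`, so `|λ| ≤ 1 + ∑ Mᵢ |λ|^{1-Nᵢ} ≤ 1 + ∑ Mᵢ (1+ε)^{1-Nᵢ}`
(the exponents are nonpositive), and the hypothesis bounds the last sum by
`∑ ε/10^{i+1} < ε`, a contradiction.
-/

lemma zpow_le_zpow_left_of_nonpos₀ {K : Type*} [Field K] [LinearOrder K] [IsStrictOrderedRing K]
    {a b : K} {n : ℤ} (hn : n ≤ 0) (ha : 0 < a) (hab : a ≤ b) : b ^ n ≤ a ^ n := by
  have h := zpow_le_zpow_left₀ (neg_nonneg.mpr hn) ha.le hab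
  rw [zpow_neg, zpow_neg] at h
  exact (inv_le_inv₀ (zpow_pos ha n) (zpow_pos (ha.trans_le hab) n)).mp h

lemma sum_div_ten_pow_succ_lt {ε : ℝ} (hε : 0 < ε) (k : ℕ) :
    ∑ i ∈ range k, ε / 10 ^ (i + 1) < ε := by
  have hgeom : ∑ i ∈ range k, (1 / 10 : ℝ) ^ i ≤ 10 / 9 := by
    rw [range_eq_Ico]
    exact (geom_sum_Ico_le_of_lt_one (by norm_num) (by norm_num)).trans_eq (by norm_num)
  calc ∑ i ∈ range k, ε / 10 ^ (i + 1) = ε / 10 * ∑ i ∈ range k, (1 / 10 : ℝ) ^ i := by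
        rw [mul_sum]
        refine sum_congr rfl fun i _ => ?_
        rw [pow_succ, one_div_pow]
        field_simp
    _ ≤ ε / 10 * (10 / 9) := by gcongr
    _ < ε := by linarith

lemma eq_one_add_sum_zpow_of_pow_eq {ι : Type*} (s : Finset ι) (c : ι → ℂ) (n : ι → ℕ)
    {N : ℕ} (hN : 1 ≤ N) (hn : ∀ i ∈ s, n i ≤ N) {z : ℂ} (hz : z ≠ 0)
    (h : z ^ N = z ^ (N - 1) + ∑ i ∈ s, c i * z ^ (N - n i)) :
    z = 1 + ∑ i ∈ s, c i * z ^ (1 - (n i : ℤ)) := by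
  have hpow : z ^ (N - 1) ≠ 0 := pow_ne_zero _ hz
  refine mul_right_cancel₀ hpow ?_
  rw [add_mul, one_mul, sum_mul, ← pow_succ', Nat.sub_add_cancel hN, h]
  congr 1
  refine sum_congr rfl fun i hi => ?_
  rw [mul_assoc, ← zpow_natCast, ← zpow_natCast, ← zpow_add₀ hz]
  congr 2
  have := hn i hi
  omega

lemma norm_le_one_add_sum_of_pow_eq {ι : Type*} (s : Finset ι) (c : ι → ℂ) (n : ι → ℕ)
    {N : ℕ} (hN : 1 ≤ N) (hn : ∀ i ∈ s, n i ≤ N) {z : ℂ} (hz : z ≠ 0)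
    (h : z ^ N = z ^ (N - 1) + ∑ i ∈ s, c i * z ^ (N - n i)) :
    ‖z‖ ≤ 1 + ∑ i ∈ s, ‖c i‖ * ‖z‖ ^ (1 - (n i : ℤ)) :=
  calc ‖z‖ = ‖1 + ∑ i ∈ s, c i * z ^ (1 - (n i : ℤ))‖ := by
        rw [← eq_one_add_sum_zpow_of_pow_eq s c n hN hn hz h]
    _ ≤ 1 + ∑ i ∈ s, ‖c i * z ^ (1 - (n i : ℤ))‖ :=
        (norm_add_le _ _).trans (by rw [norm_one]; gcongr; exact norm_sum_le _ _)
    _ = 1 + ∑ i ∈ s, ‖c i‖ * ‖z‖ ^ (1 - (n i : ℤ)) := by simp only [norm_mul, norm_zpow]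

/-- Root bound for the characteristic polynomial
`p(T) = T^N − T^{N−1} − M₁ T^{N−N₁} − ⋯ − M_k T^{N−N_k}` with positive reals `Mᵢ` and
integers `0 < N₁ < ⋯ < N_k = N`: if `ε > 0` satisfies `Mᵢ (1+ε)^{1−Nᵢ} ≤ ε/10^i` for
all `i`, then every complex root `λ` of `p` satisfies `|λ| < 1 + ε`. -/
theorem stmt5 (k : ℕ) (hk : 0 < k) (M : Fin k → ℝ) (hM : ∀ i, 0 < M i)
    (Nv : Fin k → ℕ) (hmono : StrictMono Nv) (h0 : 0 < Nv ⟨0, hk⟩)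
    (N : ℕ) (hlast : Nv ⟨k - 1, Nat.sub_lt hk Nat.one_pos⟩ = N)
    (ε : ℝ) (hε : 0 < ε)
    (hcond : ∀ i : Fin k, M i * (1 + ε) ^ ((1 : ℤ) - (Nv i : ℤ)) ≤ ε / 10 ^ ((i : ℕ) + 1))
    (lam : ℂ)
    (hroot : lam ^ N - lam ^ (N - 1) - ∑ i : Fin k, (M i : ℂ) * lam ^ (N - Nv i) = 0) :
    ‖lam‖ < 1 + ε := by
  by_contra! hge
  have hNv_pos (i : Fin k) : 1 ≤ Nv i := 
    h0.trans_le (hmono.monotone (Fin.le_iff_val_le_val.mpr (Nat.zero_le _)))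
  have hNv_le (i : Fin k) : Nv i ≤ N := 
    hlast ▸ hmono.monotone (Fin.le_iff_val_le_val.mpr (Nat.le_sub_one_of_lt i.isLt))
  have hlam : lam ≠ 0 := norm_pos_iff.mp (by linarith)
  have hbound := norm_le_one_add_sum_of_pow_eq univ (fun i => (M i : ℂ)) Nv
    ((hNv_pos ⟨0, hk⟩).trans (hNv_le _)) (fun i _ => hNv_le i) hlam (by linear_combination hroot)
  have hterm (i : Fin k) : ‖(M i : ℂ)‖ * ‖lam‖ ^ (1 - (Nv i : ℤ)) ≤ ε / 10 ^ ((i : ℕ) + 1) := by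
    rw [Complex.norm_real, Real.norm_of_nonneg (hM i).le]
    refine le_trans (mul_le_mul_of_nonneg_left ?_ (hM i).le) (hcond i)
    exact zpow_le_zpow_left_of_nonpos₀ (by have := hNv_pos i; omega) (by linarith) hge
  have hsum := sum_div_ten_pow_succ_lt hε k
  rw [← Fin.sum_univ_eq_sum_range (fun i => ε / 10 ^ (i + 1))] at hsum
  linarith [sum_le_sum fun i (_ : i ∈ univ) => hterm i]
end

section
/- Every finite Radon measure μ on a Noetherian Priestley space (X, τ, ≤) is atomic: there is a countable set F ⊆ X with μ = Σ_{x∈F} μ({x}) δ_x. -/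
open Set MeasureTheory

/-!
Take a closed down-set `D` minimal (by Noetherianity) among those of positive measure.
Minimality makes `D` "prime" for clopen down-sets: a clopen down-set meeting `D` in positive
measure contains `D`, so `D` is not covered by two clopen down-sets that both miss part of it.
Compactness then yields a greatest element `x` of `D`. If `{x}` were null, inner regularity would
give a compact `K ⊆ D \ {x}` of positive measure; every point of `K` lies strictly below `x`, so
`K` is covered by a clopen down-set avoiding `x`, which must then contain `D ∋ x`. Hence every
nonzero measure has an atom, and a finite measure is concentrated on its countably many atoms.
-/

theorem PriestleySpace.of_isLowerSet {X : Type*} [TopologicalSpace X] [Preorder X]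
    (h : ∀ x y : X, ¬ y ≤ x →
      ∃ U : Set X, IsClopen U ∧ IsLowerSet U ∧ x ∈ U ∧ y ∉ U) :
    PriestleySpace X where
  priestley {x y} hxy :=
    let ⟨U, hU, hUl, hyU, hxU⟩ := h y x hxy
    ⟨Uᶜ, hU.compl, hUl.compl, hxU, not_not.2 hyU⟩

theorem exists_minimal_isClosed_isLowerSet {X : Type*} [TopologicalSpace X] [Preorder X]
    (hnoeth : ∀ C : ℕ → Set X, (∀ n, IsClosed (C n) ∧ IsLowerSet (C n)) →
      (∀ n, C (n + 1) ⊆ C n) → ∃ N, ∀ n ≥ N, C n = C N)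
    {P : Set X → Prop} (hP : ∃ D, IsClosed D ∧ IsLowerSet D ∧ P D) :
    ∃ D, Minimal (fun D ↦ IsClosed D ∧ IsLowerSet D ∧ P D) D := by
  have hwf : IsWF {D : Set X | IsClosed D ∧ IsLowerSet D ∧ P D} := by
    refine isWF_iff_no_descending_seq.2 fun C hC hCmem ↦ ?_
    obtain ⟨N, hN⟩ := hnoeth C (fun n ↦ ⟨(hCmem n).1, (hCmem n).2.1⟩)
      (fun n ↦ (hC n.lt_succ_self).le)
    exact (hC N.lt_succ_self).ne (hN (N + 1) N.le_succ)
  exact hwf.exists_minimal hP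

section Priestley

variable {X : Type*} [TopologicalSpace X] [PartialOrder X] [PriestleySpace X]

theorem IsCompact.exists_isClopen_isLowerSet_subset_notMem {K : Set X} (hK : IsCompact K)
    {x : X} (hKx : ∀ y ∈ K, ¬ x ≤ y) :
    ∃ V : Set X, IsClopen V ∧ IsLowerSet V ∧ K ⊆ V ∧ x ∉ V := by
  refine hK.induction_on ⟨∅, isClopen_empty, isLowerSet_empty, subset_rfl, notMem_empty x⟩
    (fun s t hst ⟨V, hV, hVl, htV, hxV⟩ ↦ ⟨V, hV, hVl, hst.trans htV, hxV⟩)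
    (fun s t ⟨V, hV, hVl, hsV, hxV⟩ ⟨W, hW, hWl, htW, hxW⟩ ↦
      ⟨V ∪ W, hV.union hW, hVl.union hWl, union_subset_union hsV htW, by simp [hxV, hxW]⟩)
    fun y hy ↦ ?_
  obtain ⟨V, hV, hVl, hxV, hyV⟩ := exists_isClopen_lower_of_not_le (hKx y hy)
  exact ⟨V, mem_nhdsWithin_of_mem_nhds (hV.isOpen.mem_nhds hyV), V, hV, hVl, subset_rfl, hxV⟩

theorem IsClosed.exists_isGreatest_of_isClopen_isLowerSet_prime [CompactSpace X] {D : Set X}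
    (hD : IsClosed D) (hne : D.Nonempty)
    (hprime : ∀ U V : Set X, IsClopen U → IsLowerSet U → IsClopen V → IsLowerSet V →
      D ⊆ U ∪ V → D ⊆ U ∨ D ⊆ V) :
    ∃ x, IsGreatest D x := by
  let ι := {U : Set X // IsClopen U ∧ IsLowerSet U ∧ ¬ D ⊆ U}
  let U₀ : ι := ⟨∅, isClopen_empty, isLowerSet_empty, hne.not_subset_empty⟩
  have : Nonempty ι := ⟨U₀⟩
  have hdir : Directed (· ⊇ ·) fun U : ι ↦ D \ U.1 := by
    rintro ⟨U, hU, hUl, hDU⟩ ⟨V, hV, hVl, hDV⟩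
    refine ⟨⟨U ∪ V, hU.union hV, hUl.union hVl, fun h ↦ ?_⟩, ?_, ?_⟩
    · exact (hprime U V hU hUl hV hVl h).elim hDU hDV
    · exact sdiff_subset_sdiff_right subset_union_left
    · exact sdiff_subset_sdiff_right subset_union_right
  obtain ⟨x, hx⟩ := IsCompact.nonempty_iInter_of_directed_nonempty_isCompact_isClosed _ hdir
    (fun U ↦ sdiff_nonempty.2 U.2.2.2) (fun U ↦ hD.isCompact.diff U.2.1.isOpen)
    (fun U ↦ hD.sdiff U.2.1.isOpen)
  have hxU : ∀ U : ι, x ∈ D \ U.1 := mem_iInter.1 hx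
  refine ⟨x, (hxU U₀).1, fun y hy ↦ ?_⟩
  by_contra hyx
  obtain ⟨U, hU, hUl, hyU, hxU'⟩ := exists_isClopen_lower_of_not_le hyx
  exact (hxU ⟨U, hU, hUl, fun h ↦ hyU (h hy)⟩).2 hxU'

variable [MeasurableSpace X] [BorelSpace X] [CompactSpace X]

theorem exists_measure_singleton_ne_zero_of_minimal (ν : Measure X) [ν.InnerRegular] {D : Set X}
    (hD : Minimal (fun D ↦ IsClosed D ∧ IsLowerSet D ∧ ν D ≠ 0) D) :
    ∃ x, ν {x} ≠ 0 := by
  obtain ⟨⟨hDc, hDl, hνD⟩, hmin⟩ := hD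
  have hsub : ∀ U : Set X, IsClopen U → IsLowerSet U → ν (D ∩ U) ≠ 0 → D ⊆ U :=
    fun U hU hUl h ↦
      (hmin ⟨hDc.inter hU.isClosed, hDl.inter hUl, h⟩ inter_subset_left).trans inter_subset_right
  have hprime : ∀ U V : Set X, IsClopen U → IsLowerSet U → IsClopen V → IsLowerSet V →
      D ⊆ U ∪ V → D ⊆ U ∨ D ⊆ V := by
    intro U V hU hUl hV hVl hDUV
    by_contra! h
    have hU0 : ν (D ∩ U) = 0 := by_contra fun h' ↦ h.1 (hsub U hU hUl h')
    have hV0 : ν (D ∩ V) = 0 := by_contra fun h' ↦ h.2 (hsub V hV hVl h')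
    refine hνD (measure_mono_null (fun y hy ↦ ?_) (measure_union_null hU0 hV0))
    exact (hDUV hy).imp (⟨hy, ·⟩) (⟨hy, ·⟩)
  obtain ⟨x, hxD, hDx⟩ := hDc.exists_isGreatest_of_isClopen_isLowerSet_prime
    (nonempty_of_measure_ne_zero hνD) hprime
  refine ⟨x, fun hx0 ↦ ?_⟩
  obtain ⟨K, hKD, hK, hνK⟩ :=
    (hDc.measurableSet.diff (measurableSet_singleton x)).exists_lt_isCompact
      (pos_iff_ne_zero.2 (by rwa [measure_sdiff_null hx0]))
  obtain ⟨V, hV, hVl, hKV, hxV⟩ := hK.exists_isClopen_isLowerSet_subset_notMem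
    fun y hy hxy ↦ (hKD hy).2 (le_antisymm (hDx (hKD hy).1) hxy)
  have hνDV : ν (D ∩ V) ≠ 0 :=
    (hνK.trans_le (measure_mono (subset_inter (fun y hy ↦ (hKD hy).1) hKV))).ne'
  exact hxV (hsub V hV hVl hνDV hxD)

theorem exists_measure_singleton_ne_zero
    (hnoeth : ∀ C : ℕ → Set X, (∀ n, IsClosed (C n) ∧ IsLowerSet (C n)) →
      (∀ n, C (n + 1) ⊆ C n) → ∃ N, ∀ n ≥ N, C n = C N)
    (ν : Measure X) [ν.InnerRegular] (hν : ν ≠ 0) :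
    ∃ x, ν {x} ≠ 0 :=
  have ⟨_, hD⟩ := exists_minimal_isClosed_isLowerSet hnoeth
    ⟨univ, isClosed_univ, isLowerSet_univ, by rwa [Ne, Measure.measure_univ_eq_zero]⟩
  exists_measure_singleton_ne_zero_of_minimal ν hD

end Priestley

/-- Every finite Radon (inner regular) Borel measure on a Noetherian Priestley space
`(X, τ, ≤)` is atomic: there is a countable set `F` such that `μ = Σ_{x∈F} μ({x}) δ_x`,
i.e. `μ s = Σ_{x ∈ s ∩ F} μ({x})` for every Borel set `s`.

A Priestley space is a compact topological poset in which `y ≰ x` is separated by a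
clopen down-set containing `x` but not `y`; Noetherian means every decreasing sequence
of closed down-sets stabilizes. -/
theorem stmt6 {X : Type*} [TopologicalSpace X] [PartialOrder X] [CompactSpace X]
    [MeasurableSpace X] [BorelSpace X]
    (hpriest : ∀ x y : X, ¬ y ≤ x →
      ∃ U : Set X, IsClopen U ∧ IsLowerSet U ∧ x ∈ U ∧ y ∉ U)
    (hnoeth : ∀ C : ℕ → Set X, (∀ n, IsClosed (C n) ∧ IsLowerSet (C n)) →
      (∀ n, C (n + 1) ⊆ C n) → ∃ N, ∀ n ≥ N, C n = C N)
    (μ : Measure X) [IsFiniteMeasure μ] [μ.InnerRegular] :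
    ∃ F : Set X, F.Countable ∧
      ∀ s : Set X, MeasurableSet s → μ s = ∑' x : ↥(s ∩ F), μ {(x : X)} := by
  have := PriestleySpace.of_isLowerSet hpriest
  set F := {x : X | 0 < μ {x}}
  have hF : F.Countable := Measure.countable_meas_pos_of_disjoint_iUnion measurableSet_singleton
    fun _ _ h ↦ disjoint_singleton.2 h
  refine ⟨F, hF, fun s hs ↦ ?_⟩
  have hnull : μ (s \ F) = 0 := by
    by_contra h
    obtain ⟨x, hx⟩ := exists_measure_singleton_ne_zero hnoeth (μ.restrict (s \ F))
      (by rwa [Ne, Measure.restrict_eq_zero])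
    rw [Measure.restrict_apply (measurableSet_singleton x)] at hx
    obtain ⟨_, rfl, -, hxF⟩ := nonempty_of_measure_ne_zero hx
    exact hxF (pos_iff_ne_zero.2 (fun h0 ↦ hx (measure_mono_null inter_subset_left h0)))
  have hsum : μ (s ∩ F) = ∑' x : ↥(s ∩ F), μ {(x : X)} := by
    simpa only [biUnion_of_singleton] using measure_biUnion (μ := μ) (hF.mono inter_subset_right)
      (pairwiseDisjoint_singleton' _) (fun x _ ↦ measurableSet_singleton x)
  rw [← measure_inter_add_sdiff s hF.measurableSet, hnull, add_zero, hsum]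
end

section
/- Every finite Radon measure without atoms on a Noetherian Priestley space is the zero measure. Equivalently, every Radon probability measure on a Noetherian Priestley space has at least one atom. -/
open Set Topology MeasureTheory

/-!
Among the closed down-sets of positive measure, Noetherianity yields a minimal one `C`. Every
point `z` of `C` other than its greatest element lies in a clopen down-set `U` missing some point
of `C`, so `C ∩ U` is a proper closed down-subset of `C` and hence null. Thus `C` minus its
(at most one) greatest element is locally null, hence null by inner regularity, and since
points are null, `μ C = 0`: a contradiction.
-/

theorem PriestleySpace.of_lowerSet_separation {X : Type*} [TopologicalSpace X] [Preorder X]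
    (h : ∀ x y : X, ¬ y ≤ x →
      ∃ U : Set X, IsClopen U ∧ IsLowerSet U ∧ x ∈ U ∧ y ∉ U) :
    PriestleySpace X where
  priestley {y x} hyx :=
    let ⟨U, hU, hUl, hx, hy⟩ := h x y hyx
    ⟨Uᶜ, hU.compl, hUl.compl, hy, not_not.2 hx⟩

theorem Set.wellFoundedOn_lt_of_antitone_stabilizes {α : Type*} [PartialOrder α] {s : Set α}
    (h : ∀ f : ℕ → α, (∀ n, f n ∈ s) → (∀ n, f (n + 1) ≤ f n) →
      ∃ N, ∀ n ≥ N, f n = f N) :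
    s.WellFoundedOn (· < ·) := by
  refine Set.wellFoundedOn_iff_no_descending_seq.2 fun f hfs => ?_
  have hlt : ∀ n, f (n + 1) < f n := fun n => f.map_rel_iff.2 n.lt_succ_self
  obtain ⟨N, hN⟩ := h f hfs fun n => (hlt n).le
  exact (hlt N).ne (hN (N + 1) N.le_succ)

namespace MeasureTheory

variable {X : Type*} [TopologicalSpace X] [MeasurableSpace X] {μ : Measure X}

theorem Measure.measure_eq_zero_of_forall_nhdsWithin [μ.InnerRegular] {s : Set X}
    (hs : MeasurableSet s) (h : ∀ x ∈ s, ∃ t ∈ 𝓝[s] x, μ t = 0) : μ s = 0 := by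
  by_contra hμ
  obtain ⟨K, hKs, hK, hμK⟩ := hs.exists_lt_isCompact (pos_iff_ne_zero.2 hμ)
  refine hμK.ne' (hK.measure_zero_of_nhdsWithin fun x hx => ?_)
  obtain ⟨t, ht, hμt⟩ := h x (hKs hx)
  exact ⟨t, nhdsWithin_mono x hKs ht, hμt⟩

variable [PartialOrder X] [PriestleySpace X] [BorelSpace X]

theorem measure_eq_zero_of_forall_closed_lowerSet_ssubset [μ.InnerRegular]
    [NullSingletonClass μ] {C : Set X} (hC : IsClosed C) (hCl : IsLowerSet C)
    (hnull : ∀ D, IsClosed D → IsLowerSet D → D ⊂ C → μ D = 0) : μ C = 0 := by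
  have hgreatest : (C ∩ upperBounds C).Subsingleton := fun _ hx _ hy => IsGreatest.unique hx hy
  suffices μ (C \ (C ∩ upperBounds C)) = 0 by
    rwa [measure_sdiff_null (hgreatest.measure_zero μ)] at this
  refine Measure.measure_eq_zero_of_forall_nhdsWithin
    (hC.measurableSet.diff hgreatest.measurableSet) fun z ⟨hzC, hz⟩ => ?_
  obtain ⟨w, hwC, hwz⟩ : ∃ w ∈ C, ¬ w ≤ z := by
    simpa [mem_upperBounds, hzC] using hz
  obtain ⟨U, hU, hUl, hwU, hzU⟩ := exists_isClopen_lower_of_not_le hwz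
  have hCU : C ∩ U ⊂ C := ssubset_of_subset_not_subset inter_subset_left fun h => hwU (h hwC).2
  exact ⟨_ ∩ U, inter_mem_nhdsWithin _ (hU.isOpen.mem_nhds hzU),
    measure_mono_null (inter_subset_inter_left U sdiff_subset)
      (hnull _ (hC.inter hU.isClosed) (hCl.inter hUl) hCU)⟩

theorem measure_eq_zero_of_wellFoundedOn_closed_lowerSets
    (hwf : {C : Set X | IsClosed C ∧ IsLowerSet C}.WellFoundedOn (· < ·))
    (μ : Measure X) [μ.InnerRegular] [NullSingletonClass μ] : μ = 0 := by
  by_contra hμ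
  obtain ⟨C, ⟨⟨hC, hCl⟩, hμC⟩, hCmin⟩ := (hwf.subset fun _ => And.left).exists_minimal
      (s := {C | (IsClosed C ∧ IsLowerSet C) ∧ μ C ≠ 0})
      ⟨univ, ⟨isClosed_univ, isLowerSet_univ⟩, by simpa using hμ⟩
  refine hμC (measure_eq_zero_of_forall_closed_lowerSet_ssubset hC hCl fun D hD hDl hDC => ?_)
  by_contra hμD
  exact hDC.not_subset (hCmin ⟨⟨hD, hDl⟩, hμD⟩ hDC.subset)

end MeasureTheory

theorem stmt7_general {X : Type*} [TopologicalSpace X] [PartialOrder X]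
    [MeasurableSpace X] [BorelSpace X]
    (hpriest : ∀ x y : X, ¬ y ≤ x →
      ∃ U : Set X, IsClopen U ∧ IsLowerSet U ∧ x ∈ U ∧ y ∉ U)
    (hnoeth : ∀ C : ℕ → Set X, (∀ n, IsClosed (C n) ∧ IsLowerSet (C n)) →
      (∀ n, C (n + 1) ⊆ C n) → ∃ N, ∀ n ≥ N, C n = C N) :
    (∀ μ : Measure X, μ.InnerRegular → IsFiniteMeasure μ →
      (∀ x : X, μ {x} = 0) → μ = 0) ∧
    (∀ μ : Measure X, μ.InnerRegular → IsProbabilityMeasure μ →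
      ∃ x : X, 0 < μ {x}) := by
  have : PriestleySpace X := .of_lowerSet_separation hpriest
  have hatomless : ∀ μ : Measure X, μ.InnerRegular → (∀ x : X, μ {x} = 0) → μ = 0 :=
    fun μ _ hatom =>
      have : NullSingletonClass μ := ⟨hatom⟩
      measure_eq_zero_of_wellFoundedOn_closed_lowerSets
        (Set.wellFoundedOn_lt_of_antitone_stabilizes hnoeth) μ
  refine ⟨fun μ hreg _ => hatomless μ hreg, fun μ hreg _ => ?_⟩
  by_contra! hμ
  exact IsProbabilityMeasure.ne_zero μ (hatomless μ hreg fun x => nonpos_iff_eq_zero.1 (hμ x))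

/-- On a Noetherian Priestley space: every finite Radon (inner regular) Borel measure
without atoms is the zero measure; equivalently, every Radon probability measure has
at least one atom. -/
theorem stmt7 {X : Type*} [TopologicalSpace X] [PartialOrder X] [CompactSpace X]
    [MeasurableSpace X] [BorelSpace X]
    (hpriest : ∀ x y : X, ¬ y ≤ x →
      ∃ U : Set X, IsClopen U ∧ IsLowerSet U ∧ x ∈ U ∧ y ∉ U)
    (hnoeth : ∀ C : ℕ → Set X, (∀ n, IsClosed (C n) ∧ IsLowerSet (C n)) →
      (∀ n, C (n + 1) ⊆ C n) → ∃ N, ∀ n ≥ N, C n = C N) :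
    (∀ μ : Measure X, μ.InnerRegular → IsFiniteMeasure μ →
      (∀ x : X, μ {x} = 0) → μ = 0) ∧
    (∀ μ : Measure X, μ.InnerRegular → IsProbabilityMeasure μ →
      ∃ x : X, 0 < μ {x}) :=
  stmt7_general hpriest hnoeth
end

section
/- Let (X,≤) be a partially ordered set, and let τ_≤ be the topology generated by the sets K_x = {y : y ≤ x} and their complements. If (X, τ_≤) is compact, then: (X,≤) satisfies the descending chain condition; there is a finite set F ⊆ X with X = ⋃_{x∈F} K_x; and for all x, y ∈ X there is a finite set F(x,y) with K_x ∩ K_y = ⋃_{z∈F(x,y)} K_z. Conversely, these three conditions imply that (X, τ_≤) is compact. -/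
/-! Every `Iic x` is clopen in `τ_≤`. Compactness then makes compact lower sets finite unions of
principal ones and rules out infinite descending chains; conversely, an ultrafilter `𝒰` converges
to the least `m` with `Iic m ∈ 𝒰`, which exists by well-foundedness and the two finiteness
conditions. -/

open Set

theorem wellFoundedLT_iff_descending_chain_condition {α : Type*} [PartialOrder α] :
    WellFoundedLT α ↔ ∀ u : ℕ → α, (∀ n, u (n + 1) ≤ u n) → ∃ N, ∀ n ≥ N, u n = u N := by
  refine ⟨fun _ u hu => ?_, fun h => ?_⟩
  · obtain ⟨N, hN⟩ := WellFoundedLT.antitone_chain_condition (antitone_nat_of_succ_le hu)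
    exact ⟨N, fun n hn => (hN n hn).symm⟩
  · refine (wellFoundedGT_iff_monotone_chain_condition (α := αᵒᵈ)).2 fun a => ?_
    obtain ⟨N, hN⟩ := h a fun n => a.mono n.le_succ
    exact ⟨N, fun n hn => (hN n hn).symm⟩

section OpenIic

variable {X : Type*} [TopologicalSpace X]

theorem IsLowerSet.isOpen_of_isOpen_Iic [Preorder X] (hIic : ∀ x : X, IsOpen (Iic x))
    {s : Set X} (hs : IsLowerSet s) : IsOpen s :=
  isOpen_iff_forall_mem_open.2 fun x hx => ⟨Iic x, hs.Iic_subset hx, hIic x, self_mem_Iic⟩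

theorem IsCompact.exists_finset_eq_biUnion_Iic [Preorder X] (hIic : ∀ x : X, IsOpen (Iic x))
    {s : Set X} (hs : IsCompact s) (hs' : IsLowerSet s) :
    ∃ F : Finset X, s = ⋃ x ∈ F, Iic x := by
  obtain ⟨F, hFs, hsF⟩ := hs.elim_nhds_subcover Iic fun x _ => (hIic x).mem_nhds self_mem_Iic
  exact ⟨F, hsF.antisymm (iUnion₂_subset fun x hx => hs'.Iic_subset (hFs x hx))⟩

/-- The intersection `W` of the `Iic (u n)` is clopen, so compactness applied to the closed sets
`Iic (u n) \ W`, whose intersection is empty, yields some `Iic (u N) ⊆ W`. -/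
theorem wellFoundedLT_of_isClopen_Iic [PartialOrder X] [CompactSpace X]
    (hIic : ∀ x : X, IsClopen (Iic x)) : WellFoundedLT X := by
  refine wellFoundedLT_iff_descending_chain_condition.2 fun u hu => ?_
  set W := ⋂ n, Iic (u n)
  have hW : IsClopen W :=
    ⟨isClosed_iInter fun n => (hIic _).isClosed,
      (isLowerSet_iInter fun n => isLowerSet_Iic _).isOpen_of_isOpen_Iic fun x => (hIic x).isOpen⟩
  obtain ⟨N, hN⟩ : ∃ N, Iic (u N) ⊆ W := by
    by_contra! h
    obtain ⟨x, hx⟩ := IsCompact.nonempty_iInter_of_sequence_nonempty_isCompact_isClosed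
      (fun n => Iic (u n) \ W) (fun n => sdiff_subset_sdiff_left (Iic_subset_Iic.2 (hu n)))
      (fun n => sdiff_nonempty.2 (h n)) ((hIic _).isClosed.sdiff hW.isOpen).isCompact
      (fun n => (hIic _).isClosed.sdiff hW.isOpen)
    have hx' : ∀ n, x ∈ Iic (u n) \ W := mem_iInter.1 hx
    exact (hx' 0).2 (mem_iInter.2 fun n => (hx' n).1)
  exact ⟨N, fun n hn =>
    le_antisymm (antitone_nat_of_succ_le hu hn) (mem_iInter.1 (hN self_mem_Iic) n)⟩

end OpenIic

section Ultrafilter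

variable {X : Type*} [Preorder X]

theorem Ultrafilter.exists_Iic_mem (hcover : ∃ F : Finset X, ∀ y, ∃ x ∈ F, y ≤ x)
    (𝒰 : Ultrafilter X) : ∃ x, Iic x ∈ 𝒰 := by
  obtain ⟨F, hF⟩ := hcover
  have hunion : (⋃ x ∈ (F : Set X), Iic x) ∈ 𝒰 := Filter.univ_mem' fun y =>
    let ⟨x, hxF, hyx⟩ := hF y
    mem_biUnion hxF hyx
  obtain ⟨x, -, hx⟩ := (Ultrafilter.finite_biUnion_mem_iff F.finite_toSet).1 hunion
  exact ⟨x, hx⟩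

/-- A minimal `m` with `Iic m ∈ 𝒰` is least: for any other such `x`, the ultrafilter contains
one of the finitely many `Iic w` covering `Iic m ∩ Iic x`, and minimality forces `w = m`. -/
theorem Ultrafilter.exists_isLeast_Iic_mem [WellFoundedLT X]
    (hcover : ∃ F : Finset X, ∀ y, ∃ x ∈ F, y ≤ x)
    (hinter : ∀ x y : X, ∃ F : Finset X, Iic x ∩ Iic y = ⋃ w ∈ F, Iic w) (𝒰 : Ultrafilter X) :
    ∃ m, IsLeast {x | Iic x ∈ 𝒰} m := by
  obtain ⟨m, hm⟩ := WellFoundedLT.exists_minimal ‹_› {x | Iic x ∈ 𝒰} (𝒰.exists_Iic_mem hcover)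
  refine ⟨m, hm.prop, fun x hx => ?_⟩
  obtain ⟨F, hF⟩ := hinter m x
  have hmem : (⋃ w ∈ (F : Set X), Iic w) ∈ 𝒰 := hF ▸ Filter.inter_mem hm.prop hx
  obtain ⟨w, hwF, hw⟩ := (Ultrafilter.finite_biUnion_mem_iff F.finite_toSet).1 hmem
  have hwmx : w ∈ Iic m ∩ Iic x := hF ▸ mem_biUnion hwF self_mem_Iic
  exact (hm.le_of_le hw hwmx.1).trans hwmx.2

end Ultrafilter

/-- The topology `τ_≤`. -/
abbrev principalDownSetTopology (X : Type*) [Preorder X] : TopologicalSpace X :=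
  .generateFrom {s | ∃ x, s = Iic x ∨ s = (Iic x)ᶜ}

namespace principalDownSetTopology

variable {X : Type*} [Preorder X]

attribute [local instance] principalDownSetTopology

theorem isClopen_Iic (x : X) : IsClopen (Iic x) :=
  ⟨isOpen_compl_iff.1 (.basic _ ⟨x, .inr rfl⟩), .basic _ ⟨x, .inl rfl⟩⟩

theorem le_nhds_of_isLeast {𝒰 : Ultrafilter X} {m : X} (hm : IsLeast {x | Iic x ∈ 𝒰} m) :
    ↑𝒰 ≤ nhds m := by
  refine TopologicalSpace.tendsto_nhds_generateFrom_iff.2 ?_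
  rintro _ ⟨x, rfl | rfl⟩ hmx
  · exact Filter.mem_of_superset hm.1 (Iic_subset_Iic.2 hmx)
  · exact Ultrafilter.compl_mem_iff_notMem.2 fun hx => hmx (hm.2 hx)

theorem compactSpace [WellFoundedLT X] (hcover : ∃ F : Finset X, ∀ y, ∃ x ∈ F, y ≤ x)
    (hinter : ∀ x y : X, ∃ F : Finset X, Iic x ∩ Iic y = ⋃ w ∈ F, Iic w) : CompactSpace X :=
  ⟨isCompact_iff_ultrafilter_le_nhds.2 fun 𝒰 _ =>
    let ⟨m, hm⟩ := 𝒰.exists_isLeast_Iic_mem hcover hinter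
    ⟨m, mem_univ m, le_nhds_of_isLeast hm⟩⟩

end principalDownSetTopology

/-- For a poset `(X,≤)` let `τ_≤` be the topology generated by the principal down-sets
`K_x = {y : y ≤ x}` and their complements. Then `(X, τ_≤)` is compact if and only if:
`(X,≤)` satisfies the descending chain condition; `X` is a finite union of principal
down-sets; and any intersection `K_x ∩ K_y` is a finite union of principal down-sets. -/
theorem stmt9 {X : Type*} [PartialOrder X] :
    @CompactSpace X
        (TopologicalSpace.generateFrom
          {s : Set X | ∃ x : X, s = {y | y ≤ x} ∨ s = {y | y ≤ x}ᶜ}) ↔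
    ((∀ u : ℕ → X, (∀ n, u (n + 1) ≤ u n) → ∃ N, ∀ n ≥ N, u n = u N) ∧
      (∃ F : Finset X, ∀ y : X, ∃ x ∈ F, y ≤ x) ∧
      (∀ x y : X, ∃ F : Finset X,
        {z : X | z ≤ x} ∩ {z : X | z ≤ y} = ⋃ w ∈ F, {z : X | z ≤ w})) := by
  change @CompactSpace X (principalDownSetTopology X) ↔ _
  let := principalDownSetTopology X
  have hIic := principalDownSetTopology.isClopen_Iic (X := X)
  refine ⟨fun _ => ⟨?_, ?_, fun x y => ?_⟩, fun ⟨hdcc, hcover, hinter⟩ => ?_⟩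
  · exact wellFoundedLT_iff_descending_chain_condition.1 (wellFoundedLT_of_isClopen_Iic hIic)
  · obtain ⟨F, hF⟩ := isCompact_univ.exists_finset_eq_biUnion_Iic (hIic · |>.isOpen)
      isLowerSet_univ
    exact ⟨F, fun y => by simpa using hF.subset (mem_univ y)⟩
  · exact ((hIic x).isClosed.inter (hIic y).isClosed).isCompact.exists_finset_eq_biUnion_Iic
      (hIic · |>.isOpen) (isLowerSet_Iic x |>.inter (isLowerSet_Iic y))
  · have := wellFoundedLT_iff_descending_chain_condition.2 hdcc
    exact principalDownSetTopology.compactSpace hcover hinter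
end

section
/- Let (X,≤) be a poset such that (X, τ_≤) is compact, where τ_≤ is the topology generated by the principal down-sets K_x and their complements. Then (X, τ_≤, ≤) is a Noetherian Priestley space: it is a Priestley space, and every decreasing sequence of closed down-sets stabilizes. -/
open Set

/-! In `τ_≤` every principal down-set `K_x = Iic x` is clopen, so `K_x` itself separates `x`
from any `y ≰ x`. Moreover every down-set is a union of the open sets `K_x`, hence open. Thus
the intersection `D` of a decreasing sequence of closed down-sets `C n` is open, the sets
`C n \ D` form a decreasing sequence of closed sets with empty intersection, and by compactness
one of them is already empty: from there on `C n = D`. -/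

theorem IsLowerSet.isOpen_of_forall_isOpen_Iic {X : Type*} [Preorder X] [TopologicalSpace X]
    (hIic : ∀ x : X, IsOpen (Iic x)) {s : Set X} (hs : IsLowerSet s) : IsOpen s := by
  have hs_eq : s = ⋃ x ∈ s, Iic x :=
    Subset.antisymm (fun x hx => mem_biUnion hx le_rfl)
      (iUnion₂_subset fun _ hx _ hy => hs hy hx)
  rw [hs_eq]
  exact isOpen_biUnion fun x _ => hIic x

theorem Antitone.exists_forall_ge_eq_of_isOpen_iInter {X ι : Type*} [TopologicalSpace X]
    [CompactSpace X] [Preorder ι] [IsDirectedOrder ι] [Nonempty ι] {C : ι → Set X}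
    (hanti : Antitone C) (hclosed : ∀ i, IsClosed (C i)) (hopen : IsOpen (⋂ i, C i)) :
    ∃ i, ∀ j ≥ i, C j = C i := by
  have hempty : (⋂ i, C i \ ⋂ j, C j) = ∅ := by
    refine eq_empty_of_forall_notMem fun x hx => ?_
    have hx' := mem_iInter.1 hx
    exact (hx' (Classical.arbitrary ι)).2 (mem_iInter.2 fun i => (hx' i).1)
  obtain ⟨i, hi⟩ := isCompact_univ.elim_directed_family_closed (fun i => C i \ ⋂ j, C j)
    (fun i => (hclosed i).sdiff hopen) (by rw [univ_inter, hempty])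
    (Antitone.directed_ge fun i j hij => sdiff_subset_sdiff_left (hanti hij))
  have hCi : C i ⊆ ⋂ j, C j := by simpa [sdiff_eq_empty] using hi
  exact ⟨i, fun j hij => (hanti hij).antisymm (hCi.trans (iInter_subset C j))⟩

/-- Let `(X,≤)` be a poset and `τ_≤` the topology generated by the principal down-sets
`K_x` and their complements. If `(X, τ_≤)` is compact, then `(X, τ_≤, ≤)` is a
Noetherian Priestley space: whenever `y ≰ x` there is a clopen down-set containing `x`
but not `y`, and every decreasing sequence of closed down-sets stabilizes. -/
theorem stmt10 {X : Type*} [PartialOrder X]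
    (t : TopologicalSpace X)
    (ht : t = TopologicalSpace.generateFrom
      {s : Set X | ∃ x : X, s = {y | y ≤ x} ∨ s = {y | y ≤ x}ᶜ})
    (hcomp : @CompactSpace X t) :
    (∀ x y : X, ¬ y ≤ x →
      ∃ U : Set X, @IsClopen X t U ∧ IsLowerSet U ∧ x ∈ U ∧ y ∉ U) ∧
    (∀ C : ℕ → Set X, (∀ n, @IsClosed X t (C n) ∧ IsLowerSet (C n)) →
      (∀ n, C (n + 1) ⊆ C n) → ∃ N, ∀ n ≥ N, C n = C N) := by
  have hIic_open (x : X) : IsOpen (Iic x) := by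
    rw [ht]; exact TopologicalSpace.isOpen_generateFrom_of_mem ⟨x, Or.inl rfl⟩
  have hIic_closed (x : X) : IsClosed (Iic x) := by
    rw [← isOpen_compl_iff, ht]; exact TopologicalSpace.isOpen_generateFrom_of_mem ⟨x, Or.inr rfl⟩
  refine ⟨fun x y hyx => ⟨Iic x, ⟨hIic_closed x, hIic_open x⟩, isLowerSet_Iic x, le_rfl, hyx⟩,
    fun C hC hsucc => ?_⟩
  exact (antitone_nat_of_succ_le hsucc).exists_forall_ge_eq_of_isOpen_iInter (fun n => (hC n).1)
    ((isLowerSet_iInter fun n => (hC n).2).isOpen_of_forall_isOpen_Iic hIic_open)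
end

section
/- Let R be a commutative ring with unit. The set Id(R) of proper ideals of R, endowed with the Zariski topology generated by the sets {𝔄 ∈ Id(R) : f ∉ 𝔄} for f ∈ R, is quasi-compact, and the constructible topology on Id(R) is finer than this Zariski topology. -/
open Set

/-- The set `Id(R)` of proper ideals of `R`. -/
def ProperIdeal (R : Type*) [CommRing R] : Type _ := {I : Ideal R // I ≠ ⊤}

/-- The characteristic-function embedding `Id(R) → {0,1}^R`. -/
noncomputable def idealChi (R : Type*) [CommRing R] : ProperIdeal R → (R → Bool) :=
  fun I a => @decide (a ∈ I.1) (Classical.propDecidable _)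

/-- The constructible topology on `Id(R)`: the topology induced from the product
topology on `{0,1}^R` via characteristic functions. -/
noncomputable def conTop (R : Type*) [CommRing R] : TopologicalSpace (ProperIdeal R) :=
  TopologicalSpace.induced (idealChi R) inferInstance

/-- The Zariski topology on `Id(R)`, generated by the sets `{𝔄 : f ∉ 𝔄}`, `f ∈ R`. -/
def zarTop (R : Type*) [CommRing R] : TopologicalSpace (ProperIdeal R) :=
  TopologicalSpace.generateFrom {s : Set (ProperIdeal R) | ∃ f : R, s = {I | f ∉ I.1}}

/-! The constructible topology is quasi-compact: `idealChi` embeds `Id(R)` in the compact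
space `{0,1}^R` with closed image, since being the indicator of a proper ideal is a conjunction
of conditions each involving finitely many coordinates. It refines the Zariski topology, as
`{𝔄 : f ∉ 𝔄}` is the preimage of the open set `{χ : χ f = false}`; hence the Zariski topology,
being coarser, is quasi-compact too. -/

lemma CompactSpace.of_le {X : Type*} {t₁ t₂ : TopologicalSpace X} (h : t₁ ≤ t₂)
    (hc : @CompactSpace X t₁) : @CompactSpace X t₂ :=
  @Function.Surjective.compactSpace _ _ t₁ t₂ _ (continuous_id_iff_le.mpr h) hc
    Function.surjective_id

lemma isClopen_setOf_apply_eq {ι Y : Type*} [TopologicalSpace Y] [DiscreteTopology Y]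
    (i : ι) (y : Y) : IsClopen {χ : ι → Y | χ i = y} :=
  (isClopen_discrete {y}).preimage (continuous_apply i)

section ConstructibleTopology

variable (R : Type*) [CommRing R]

lemma idealChi_eq_true_iff (I : ProperIdeal R) (a : R) : idealChi R I a = true ↔ a ∈ I.1 := by
  simp [idealChi]

lemma idealChi_injective : Function.Injective (idealChi R) := fun I J h =>
  Subtype.ext <| Ideal.ext fun a => by
    rw [← idealChi_eq_true_iff, ← idealChi_eq_true_iff, h]

lemma range_idealChi :
    range (idealChi R) =
      {χ : R → Bool | χ 1 = false ∧ χ 0 = true ∧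
        (∀ a b, χ a = true → χ b = true → χ (a + b) = true) ∧
        ∀ r a, χ a = true → χ (r * a) = true} := by
  ext χ
  constructor
  · rintro ⟨I, rfl⟩
    simp only [mem_ofPred_eq, idealChi_eq_true_iff, Bool.eq_false_iff, ne_eq]
    exact ⟨fun h => I.2 ((Ideal.eq_top_iff_one _).mpr h), I.1.zero_mem,
      fun _ _ => I.1.add_mem, fun r _ => I.1.mul_mem_left r⟩
  · rintro ⟨h1, h0, hadd, hmul⟩
    let I : Ideal R :=
      { carrier := {a | χ a = true}
        add_mem' := hadd _ _
        zero_mem' := h0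
        smul_mem' := hmul }
    have hI : I ≠ ⊤ := fun h =>
      Bool.false_ne_true (h1.symm.trans ((Ideal.eq_top_iff_one I).mp h))
    exact ⟨⟨I, hI⟩, funext fun a => Bool.eq_iff_iff.mpr (idealChi_eq_true_iff R ⟨I, hI⟩ a)⟩

lemma isClosed_range_idealChi : IsClosed (range (idealChi R)) := by
  have hclopen := isClopen_setOf_apply_eq (ι := R) (Y := Bool)
  rw [range_idealChi]
  simp only [ofPred_and, ofPred_forall]
  refine (hclopen 1 false).isClosed.inter <| (hclopen 0 true).isClosed.inter <|
    (isClosed_iInter fun a => isClosed_iInter fun b => ?_).inter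
      (isClosed_iInter fun r => isClosed_iInter fun a => ?_)
  · exact isClosed_imp (hclopen a true).isOpen <|
      isClosed_imp (hclopen b true).isOpen (hclopen (a + b) true).isClosed
  · exact isClosed_imp (hclopen a true).isOpen (hclopen (r * a) true).isClosed

lemma isClosedEmbedding_idealChi :
    @Topology.IsClosedEmbedding _ _ (conTop R) _ (idealChi R) :=
  letI := conTop R
  ⟨⟨⟨rfl⟩, idealChi_injective R⟩, isClosed_range_idealChi R⟩

lemma compactSpace_conTop : @CompactSpace _ (conTop R) :=
  @Topology.IsClosedEmbedding.compactSpace _ _ (conTop R) _ _ _ (isClosedEmbedding_idealChi R)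

lemma conTop_le_zarTop : conTop R ≤ zarTop R := by
  rw [zarTop, TopologicalSpace.le_generateFrom_iff_subset_isOpen]
  rintro s ⟨f, rfl⟩
  exact ⟨_, (isClopen_setOf_apply_eq f false).isOpen, by ext; simp [← idealChi_eq_true_iff]⟩

end ConstructibleTopology

/-- `Id(R)` with the Zariski topology is quasi-compact, and the constructible topology
is finer than the Zariski topology. -/
theorem stmt12 (R : Type*) [CommRing R] :
    @CompactSpace (ProperIdeal R) (zarTop R) ∧ conTop R ≤ zarTop R :=
  ⟨(compactSpace_conTop R).of_le (conTop_le_zarTop R), conTop_le_zarTop R⟩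
end

section
/- Let R be a Noetherian commutative ring with unit. Then Id(R), the set of proper ideals of R ordered by reverse inclusion (𝔄 ≤ 𝔅 iff 𝔅 ⊆ 𝔄) and endowed with the constructible topology, is a Noetherian Priestley space; moreover its constructible topology coincides with the topology τ_≤ generated by the principal down-sets K_𝔄 = {𝔅 : 𝔄 ⊆ 𝔅} and their complements. -/
open Set

/-- The topology `τ_≤` generated by the principal down-sets
`K_𝔄 = {𝔅 : 𝔄 ⊆ 𝔅}` (for the order `𝔄 ≤ 𝔅 ↔ 𝔅 ⊆ 𝔄` of reverse inclusion)
and their complements. -/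
def tauLE (R : Type*) [CommRing R] : TopologicalSpace (ProperIdeal R) :=
  TopologicalSpace.generateFrom
    {s : Set (ProperIdeal R) | ∃ A : ProperIdeal R,
      s = {B | A.1 ≤ B.1} ∨ s = {B | A.1 ≤ B.1}ᶜ}

/-- A set of proper ideals is a down-set for the reverse-inclusion order iff it is
closed under passing to larger ideals. -/
def IsIdealDownSet (R : Type*) [CommRing R] (U : Set (ProperIdeal R)) : Prop :=
  ∀ A ∈ U, ∀ B : ProperIdeal R, A.1 ≤ B.1 → B ∈ U

/-!
The constructible topology is the coarsest one making every `{𝔅 | a ∈ 𝔅}` clopen. A finitely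
generated ideal `𝔄 = (a₁, …, aₙ)` has `K_𝔄 = ⋂ᵢ {𝔅 | aᵢ ∈ 𝔅}`, so in a Noetherian ring all
`K_𝔄` are clopen; conversely `{𝔅 | a ∈ 𝔅} = K_(a)`, which gives `τ_≤`. Compactness holds because
the proper ideals form a closed subset of `{0,1}^R`. Every down-set `C` is the union of the
open sets `K_𝔅`, `𝔅 ∈ C`, so the intersection of a decreasing sequence of closed down-sets is
open, and compactness forces the sequence to reach it after finitely many steps.
-/

open Topology

theorem exists_eq_of_antitone_of_isOpen_iInter {X : Type*} [TopologicalSpace X] [CompactSpace X]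
    {C : ℕ → Set X} (hC : Antitone C) (hclosed : ∀ n, IsClosed (C n))
    (hopen : IsOpen (⋂ n, C n)) : ∃ N, ∀ n ≥ N, C n = C N := by
  obtain ⟨N, hN⟩ := exists_subset_nhds_of_isCompact' hC.directed_ge
    (fun n => (hclosed n).isCompact) hclosed fun x hx => hopen.mem_nhds hx
  exact ⟨N, fun n hn => (hC hn).antisymm (hN.trans (iInter_subset C n))⟩

namespace ProperIdeal

variable {R : Type*} [CommRing R]

lemma continuous_idealChi_iff {t : TopologicalSpace (ProperIdeal R)} :
    Continuous[t, _] (idealChi R) ↔ ∀ a : R, @IsClopen _ t {B | a ∈ B.1} := by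
  rw [continuous_pi_iff]
  refine forall_congr' fun a => ?_
  rw [continuous_bool_rng true]
  convert Iff.rfl using 2
  ext B
  simp [idealChi]

lemma isClopen_tauLE_setOf_le (I : Ideal R) : @IsClopen _ (tauLE R) {B | I ≤ B.1} := by
  let := tauLE R
  by_cases hI : I = ⊤
  · convert isClopen_empty
    ext B
    simpa [hI, top_le_iff] using B.2
  · have generator (s) (hs : s = {B : ProperIdeal R | I ≤ B.1} ∨ s = {B | I ≤ B.1}ᶜ) :
        IsOpen s :=
      TopologicalSpace.isOpen_generateFrom_of_mem ⟨⟨I, hI⟩, hs⟩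
    exact ⟨isOpen_compl_iff.mp (generator _ (.inr rfl)), generator _ (.inl rfl)⟩

section conTop

attribute [local instance] conTop

lemma isClopen_setOf_mem (a : R) : IsClopen {B : ProperIdeal R | a ∈ B.1} :=
  continuous_idealChi_iff.mp continuous_induced_dom a

lemma isClopen_setOf_le_of_fg {I : Ideal R} (hI : I.FG) :
    IsClopen {B : ProperIdeal R | I ≤ B.1} := by
  obtain ⟨s, rfl⟩ := hI
  have : {B : ProperIdeal R | Ideal.span s ≤ B.1} = ⋂ a ∈ s, {B | a ∈ B.1} := by
    ext B
    simp [Ideal.span_le, Set.subset_def]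
  rw [this]
  exact isClopen_biInter_finset fun a _ => isClopen_setOf_mem a

lemma conTop_eq_tauLE [IsNoetherianRing R] : conTop R = tauLE R := by
  refine le_antisymm (le_generateFrom ?_) (continuous_iff_le_induced.mp ?_)
  · rintro s ⟨A, rfl | rfl⟩
    · exact (isClopen_setOf_le_of_fg (IsNoetherian.noetherian A.1)).isOpen
    · exact (isClopen_setOf_le_of_fg (IsNoetherian.noetherian A.1)).compl.isOpen
  · refine continuous_idealChi_iff.mpr fun a => ?_
    simpa only [Ideal.span_singleton_le_iff_mem] using isClopen_tauLE_setOf_le (Ideal.span {a})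

lemma range_idealChi : range (idealChi R) = {f | f 1 = false ∧ f 0 = true ∧
    (∀ a b, f a = true → f b = true → f (a + b) = true) ∧
    (∀ r a, f a = true → f (r * a) = true)} := by
  ext f
  constructor
  · rintro ⟨⟨I, hI⟩, rfl⟩
    simp only [idealChi, decide_eq_true_eq, decide_eq_false_iff_not, mem_ofPred_eq]
    exact ⟨(Ideal.ne_top_iff_one I).mp hI, I.zero_mem, fun _ _ => I.add_mem,
      fun r _ => I.mul_mem_left r⟩
  · rintro ⟨h1, h0, hadd, hmul⟩
    let I : Ideal R :=
      { carrier := {a | f a = true}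
        add_mem' := hadd _ _
        zero_mem' := h0
        smul_mem' := hmul }
    refine ⟨⟨I, (Ideal.ne_top_iff_one I).mpr fun h => by simp_all [I]⟩, funext fun a => ?_⟩
    simp [idealChi, I]

lemma isClosed_range_idealChi : IsClosed (range (idealChi R)) := by
  have coord {n : ℕ} (x : Fin n → R) (p : (Fin n → Bool) → Prop) :
      IsClosed {f : R → Bool | p (f ∘ x)} :=
    (isClosed_discrete {v | p v}).preimage (by fun_prop)
  rw [range_idealChi]
  simp only [ofPred_and, ofPred_forall]
  refine (coord ![1] fun v => v 0 = false).inter <| (coord ![0] fun v => v 0 = true).inter <|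
    .inter (isClosed_iInter fun a => isClosed_iInter fun b => ?_)
      (isClosed_iInter fun r => isClosed_iInter fun a => ?_)
  · exact coord ![a, b, a + b] fun v => v 0 = true → v 1 = true → v 2 = true
  · exact coord ![a, r * a] fun v => v 0 = true → v 1 = true

lemma idealChi_injective : Function.Injective (idealChi R) := fun A B h =>
  Subtype.ext <| Ideal.ext fun a => by simpa [idealChi] using congrFun h a

lemma compactSpace_conTop : CompactSpace (ProperIdeal R) :=
  Topology.IsClosedEmbedding.compactSpace (f := idealChi R)
    ⟨⟨⟨rfl⟩, idealChi_injective⟩, isClosed_range_idealChi⟩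

lemma _root_.IsIdealDownSet.isOpen [IsNoetherianRing R] {C : Set (ProperIdeal R)}
    (hC : IsIdealDownSet R C) : IsOpen C := by
  have : C = ⋃ B ∈ C, {B' : ProperIdeal R | B.1 ≤ B'.1} := by
    ext B
    simp only [mem_iUnion, mem_ofPred_eq]
    exact ⟨fun hB => ⟨B, hB, le_rfl⟩, fun ⟨A, hA, hAB⟩ => hC A hA B hAB⟩
  rw [this]
  exact isOpen_biUnion fun B _ => (isClopen_setOf_le_of_fg (IsNoetherian.noetherian B.1)).isOpen

end conTop

end ProperIdeal

/-- For a Noetherian commutative ring `R`, the space `Id(R)` of proper ideals, ordered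
by reverse inclusion and endowed with the constructible topology, is a Noetherian
Priestley space, and its constructible topology coincides with `τ_≤`. -/
theorem stmt13 (R : Type*) [CommRing R] [IsNoetherianRing R] :
    conTop R = tauLE R ∧
    @CompactSpace (ProperIdeal R) (conTop R) ∧
    (∀ x y : ProperIdeal R, ¬ x.1 ≤ y.1 →
      ∃ U : Set (ProperIdeal R), @IsClopen (ProperIdeal R) (conTop R) U ∧
        IsIdealDownSet R U ∧ x ∈ U ∧ y ∉ U) ∧
    (∀ C : ℕ → Set (ProperIdeal R),
      (∀ n, @IsClosed (ProperIdeal R) (conTop R) (C n) ∧ IsIdealDownSet R (C n)) →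
      (∀ n, C (n + 1) ⊆ C n) → ∃ N, ∀ n ≥ N, C n = C N) := by
  let := conTop R
  have := ProperIdeal.compactSpace_conTop (R := R)
  refine ⟨ProperIdeal.conTop_eq_tauLE, this, fun x y hxy => ?_, fun C hC hanti => ?_⟩
  · exact ⟨{B | x.1 ≤ B.1}, ProperIdeal.isClopen_setOf_le_of_fg (IsNoetherian.noetherian x.1),
      fun A hA B hAB => hA.trans hAB, le_refl x.1, hxy⟩
  · have hdown : IsIdealDownSet R (⋂ n, C n) := fun A hA B hAB =>
      mem_iInter.mpr fun n => (hC n).2 A (mem_iInter.mp hA n) B hAB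
    exact exists_eq_of_antitone_of_isOpen_iInter (antitone_nat_of_succ_le hanti)
      (fun n => (hC n).1) hdown.isOpen
end

section
/- Let A be a strictly k-affinoid algebra over a complete non-Archimedean field k, with spectral seminorm ρ. For x in the Berkovich spectrum ℳ(A) and 0 < ε ≤ 1, the set 𝔄_ε(x) = {a ∈ A° : |a(x)| < ε} (taken modulo {ρ < ε}) is a primary ideal of A_ε = A°/{ρ < ε}. -/
/-!
If `|a(x)| ≥ ε` and `|ab(x)| < ε`, then `|b(x)| < 1` by multiplicativity, so `|bⁿ(x)| < ε` for
large `n`: the ideal `{a ∈ A° : |a(x)| < ε}` is primary in `A°`. Since `|a(x)| ≤ ρ(a)`, it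
contains `{ρ < ε}`, and primary ideals containing the kernel stay primary in a quotient.
-/

namespace Ideal

variable {R S : Type*} [CommSemiring R] [CommSemiring S]

theorem IsPrimary.of_comap_of_surjective {f : R →+* S} (hf : Function.Surjective f)
    {K : Ideal S} (hK : (K.comap f).IsPrimary) : K.IsPrimary := by
  rw [isPrimary_iff] at hK ⊢
  refine ⟨fun hK_top => hK.1 (by rw [hK_top, comap_top]), fun {y z} hyz => ?_⟩
  obtain ⟨a, rfl⟩ := hf y
  obtain ⟨b, rfl⟩ := hf z
  rw [← map_mul, ← mem_comap] at hyz
  simpa only [mem_comap, ← comap_radical] using hK.2 hyz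

theorem IsPrimary.map_of_surjective {R S : Type*} [CommRing R] [CommRing S] {f : R →+* S}
    (hf : Function.Surjective f) {I : Ideal R} (hI : I.IsPrimary) (hker : RingHom.ker f ≤ I) :
    (I.map f).IsPrimary :=
  .of_comap_of_surjective hf (by rwa [comap_map_of_surjective' f hf, sup_eq_left.mpr hker])

theorem isPrimary_of_mem_iff_lt (v : R →* ℝ) {ε : ℝ} (hε0 : 0 < ε) (hε1 : ε ≤ 1)
    {I : Ideal R} (hI : ∀ a, a ∈ I ↔ v a < ε) : I.IsPrimary := by
  rw [isPrimary_iff]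
  refine ⟨fun hI_top => ?_, fun {a b} hab => ?_⟩
  · have h1 := (hI 1).1 (hI_top ▸ Submodule.mem_top)
    rw [map_one] at h1
    linarith
  rcases lt_or_ge (v a) ε with ha | ha
  · exact .inl ((hI a).2 ha)
  right
  have hab' : v a * v b < ε := by simpa only [map_mul] using (hI _).1 hab
  have hb1 : v b < 1 := by
    by_contra! hb
    have : v a ≤ v a * v b := le_mul_of_one_le_right (hε0.le.trans ha) hb
    linarith
  obtain ⟨n, hn⟩ := exists_pow_lt_of_lt_one hε0 hb1
  exact ⟨n, (hI _).2 (by rwa [map_pow])⟩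

end Ideal

theorem stmt19_general {A : Type*} [CommRing A]
    (ρ : A → ℝ)
    (x : A → ℝ) (hx1 : x 1 = 1)
    (hxmul : ∀ a b, x (a * b) = x a * x b)
    (hxρ : ∀ a, x a ≤ ρ a)
    (ε : ℝ) (hε0 : 0 < ε) (hε1 : ε ≤ 1)
    (O : Subring A)
    (J : Ideal O) (hJ : ∀ a : O, a ∈ J ↔ ρ (a : A) < ε)
    (I : Ideal O) (hI : ∀ a : O, a ∈ I ↔ x (a : A) < ε) :
    (Ideal.map (Ideal.Quotient.mk J) I).IsPrimary := by
  let xO : O →* ℝ :=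
    { toFun := fun a => x a, map_one' := hx1, map_mul' := fun a b => hxmul a b }
  have hI_primary : I.IsPrimary := Ideal.isPrimary_of_mem_iff_lt xO hε0 hε1 hI
  have hJI : J ≤ I := fun a ha => (hI a).2 ((hxρ a).trans_lt ((hJ a).1 ha))
  exact hI_primary.map_of_surjective Ideal.Quotient.mk_surjective (by rwa [Ideal.mk_ker])

/-- Abstract version of: for a (reduced) strictly `k`-affinoid algebra `A` with spectral
seminorm `ρ` and a point `x ∈ ℳ(A)` (a bounded multiplicative seminorm, so dominated by
the spectral seminorm `ρ = ‖·‖_sup`), and `0 < ε ≤ 1`, the image of the ideal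
`𝔄_ε(x) = {a ∈ A° : |a(x)| < ε}` in `A_ε = A°/{ρ < ε}` is a primary ideal.

Here `O = A° = {ρ ≤ 1}` is the subring of power-bounded elements, `J` is the ideal
`{a ∈ A° : ρ(a) < ε}` and `I = {a ∈ A° : |a(x)| < ε}`; the conclusion states that the
image of `I` in the quotient `A°/J` is primary. -/
theorem stmt19 {A : Type*} [CommRing A]
    (ρ : A → ℝ) (hρ0 : ∀ a, 0 ≤ ρ a) (hρ1 : ρ 1 = 1)
    (hρadd : ∀ a b, ρ (a + b) ≤ max (ρ a) (ρ b))
    (hρneg : ∀ a, ρ (-a) = ρ a)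
    (hρmul : ∀ a b, ρ (a * b) ≤ ρ a * ρ b)
    (hρpow : ∀ (a : A) (n : ℕ), ρ (a ^ n) = ρ a ^ n)
    (x : A → ℝ) (hx0 : ∀ a, 0 ≤ x a) (hx1 : x 1 = 1)
    (hxadd : ∀ a b, x (a + b) ≤ max (x a) (x b))
    (hxmul : ∀ a b, x (a * b) = x a * x b)
    (hxρ : ∀ a, x a ≤ ρ a)
    (ε : ℝ) (hε0 : 0 < ε) (hε1 : ε ≤ 1)
    (O : Subring A) (hO : ∀ a : A, a ∈ O ↔ ρ a ≤ 1)
    (J : Ideal O) (hJ : ∀ a : O, a ∈ J ↔ ρ (a : A) < ε)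
    (I : Ideal O) (hI : ∀ a : O, a ∈ I ↔ x (a : A) < ε) :
    (Ideal.map (Ideal.Quotient.mk J) I).IsPrimary :=
  stmt19_general ρ x hx1 hxmul hxρ ε hε0 hε1 O J hJ I hI
end
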